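/- arXiv:1906.01715 — 2 statements merged into one kernel-verified Lean document; each statement's English description precedes it below -/
import Mathlib

section
/- Let K̂ = K̂_φ ⊂ ℝ^d be a reference generalized prism. Then for every p ∈ ℕ and every real polynomial v of total degree at most p in d variables, ∫_{K̂} (∂v/∂x_d)² dx ≤ 12 p⁴ ∫_{K̂} v² dx. -/
open MeasureTheory

/-- The closed unit cube `[0,1]^k` in `ℝ^k` (as a plain function space). -/
def unitCube (k : ℕ) : Set (Fin k → ℝ) := {y | ∀ i, y i ∈ Set.Icc (0 : ℝ) 1}

/-- The generalized prism `K̂_φ ⊂ ℝ^{m+1}` determined by a graph function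
`φ : [0,1]^m → ℝ`:  `{x : 0 ≤ x_i ≤ 1 (i < d), 0 ≤ x_d ≤ φ(x_1,…,x_{d-1})}`, `d = m+1`. -/
def prism (m : ℕ) (φ : (Fin m → ℝ) → ℝ) : Set (EuclideanSpace ℝ (Fin (m + 1))) :=
  {x | (∀ i : Fin m, x (Fin.castSucc i) ∈ Set.Icc (0 : ℝ) 1) ∧
    x (Fin.last m) ∈ Set.Icc (0 : ℝ) (φ (fun i => x (Fin.castSucc i)))}

/-- The flat base `F̂⁰ = [0,1]^m × {0}` of a generalized prism. -/
def flatBase (m : ℕ) : Set (EuclideanSpace ℝ (Fin (m + 1))) :=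
  {x | (∀ i : Fin m, x (Fin.castSucc i) ∈ Set.Icc (0 : ℝ) 1) ∧ x (Fin.last m) = 0}

/-- The curved base `F̂ = {(x', φ(x')) : x' ∈ [0,1]^m}` of a generalized prism. -/
def curvedBase (m : ℕ) (φ : (Fin m → ℝ) → ℝ) : Set (EuclideanSpace ℝ (Fin (m + 1))) :=
  {x | (∀ i : Fin m, x (Fin.castSucc i) ∈ Set.Icc (0 : ℝ) 1) ∧
    x (Fin.last m) = φ (fun i => x (Fin.castSucc i))}

/-- `K̂_φ` is a *reference generalized prism*: `φ` is Lipschitz, the unit cube `[0,1]^{m+1}`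
is contained in `K̂_φ`, and every segment joining a point of the flat base to a point of the
curved base lies in `K̂_φ` (star-shapedness of `F̂⁰` with respect to `F̂`). -/
def IsRefGenPrism (m : ℕ) (φ : (Fin m → ℝ) → ℝ) : Prop :=
  (∃ L : NNReal, LipschitzWith L φ) ∧
  ({x : EuclideanSpace ℝ (Fin (m + 1)) | ∀ i, x i ∈ Set.Icc (0 : ℝ) 1} ⊆ prism m φ) ∧
  (∀ x ∈ flatBase m, ∀ y ∈ curvedBase m φ, segment ℝ x y ⊆ prism m φ)

/-- The parameter `r̂ := ⌊max_{[0,1]^m} φ⌋ + 1` of a reference generalized prism. -/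
noncomputable def rhat (m : ℕ) (φ : (Fin m → ℝ) → ℝ) : ℕ :=
  Nat.floor (sSup (φ '' unitCube m)) + 1

/-- The constant `C_inv^B(d, r̂) = 64(d-1)r̂(r̂+1)(2r̂+1) + 12d`. -/
def CinvB (d r : ℕ) : ℝ :=
  64 * ((d : ℝ) - 1) * (r : ℝ) * ((r : ℝ) + 1) * (2 * (r : ℝ) + 1) + 12 * (d : ℝ)


section VDIaux
open Polynomial MeasureTheory intervalIntegral Finset

noncomputable section
namespace VDI

def rodf (k : ℕ) : ℝ[X] := (X ^ 2 - X) ^ k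

lemma XX_eq : (X ^ 2 - X : ℝ[X]) = X * (X - C 1) := by rw [C_1]; ring

lemma monic_XX : (X ^ 2 - X : ℝ[X]).Monic := by
  rw [XX_eq]; exact monic_X.mul (monic_X_sub_C 1)

lemma natDegree_XX : (X ^ 2 - X : ℝ[X]).natDegree = 2 := by
  compute_degree!

lemma monic_rodf (k : ℕ) : (rodf k).Monic := (monic_XX).pow _

lemma natDegree_rodf (k : ℕ) : (rodf k).natDegree = 2 * k := by
  rw [rodf, natDegree_pow, natDegree_XX, mul_comm]

lemma coeff_rodf (k : ℕ) : (rodf k).coeff (2 * k) = 1 := by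
  have := (monic_rodf k).coeff_natDegree
  rwa [natDegree_rodf] at this

def lc (k : ℕ) : ℝ := ((2 * k).descFactorial k : ℝ) * ((k.factorial : ℝ))⁻¹

lemma lc_pos (k : ℕ) : 0 < lc k := by
  have h1 : 0 < (2 * k).descFactorial k := Nat.pos_of_ne_zero (fun h => by
    have := Nat.descFactorial_eq_zero_iff_lt.mp h; omega)
  have h2 : 0 < k.factorial := k.factorial_pos
  unfold lc
  positivity

def leg (k : ℕ) : ℝ[X] := C ((k.factorial : ℝ)⁻¹) * derivative^[k] (rodf k)

lemma coeff_leg (k : ℕ) : (leg k).coeff k = lc k := by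
  rw [leg, coeff_C_mul, Polynomial.coeff_iterate_derivative]
  have : k + k = 2 * k := by omega
  rw [this, coeff_rodf, lc]
  simp [mul_comm]

lemma natDegree_leg_le (k : ℕ) : (leg k).natDegree ≤ k := by
  refine (natDegree_C_mul_le _ _).trans ?_
  refine (Polynomial.natDegree_iterate_derivative _ _).trans ?_
  rw [natDegree_rodf]; omega

lemma iter_deriv_leg (k : ℕ) :
    derivative^[k] (leg k) = C ((k.factorial : ℝ) * lc k) := by
  have hdeg : (derivative^[k] (leg k)).natDegree ≤ 0 := by
    refine (Polynomial.natDegree_iterate_derivative _ _).trans ?_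
    have := natDegree_leg_le k; omega
  rw [eq_C_of_natDegree_le_zero hdeg, Polynomial.coeff_iterate_derivative]
  rw [zero_add, coeff_leg]
  simp [Nat.descFactorial_self, mul_comm]

def J (k : ℕ) : ℝ := ∫ x in (0:ℝ)..1, (x - x ^ 2) ^ k

lemma J_zero : J 0 = 1 := by simp [J]

lemma J_succ (j : ℕ) : (4 * (j:ℝ) + 6) * J (j + 1) = ((j:ℝ) + 1) * J j := by
  set P : ℝ[X] := (C 2 * X - C 1) * (X - X ^ 2) ^ (j + 1) with hPdef
  have hD : derivative P
      = C (4 * (j:ℝ) + 6) * (X - X ^ 2) ^ (j + 1) - C ((j:ℝ) + 1) * (X - X ^ 2) ^ j := by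
    rw [hPdef, derivative_mul, derivative_pow]
    simp only [derivative_sub, derivative_mul, derivative_C, derivative_X, derivative_X_pow,
      Nat.add_sub_cancel, map_add, map_mul, map_ofNat]
    push_cast
    ring_nf
    simp [C_1, map_add, map_ofNat]
    ring
  have heval : ∀ x : ℝ, (derivative P).eval x
      = (4 * (j:ℝ) + 6) * (x - x ^ 2) ^ (j + 1) - ((j:ℝ) + 1) * (x - x ^ 2) ^ j := by
    intro x; rw [hD]; simp
  have h0 : P.eval 0 = 0 := by simp [hPdef, zero_pow]
  have h1 : P.eval 1 = 0 := by simp [hPdef]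
  have hc1 : IntervalIntegrable (fun x : ℝ => (x - x ^ 2) ^ (j + 1)) volume 0 1 := by
    apply Continuous.intervalIntegrable; fun_prop
  have hc2 : IntervalIntegrable (fun x : ℝ => (x - x ^ 2) ^ j) volume 0 1 := by
    apply Continuous.intervalIntegrable; fun_prop
  have hint : ∫ x in (0:ℝ)..1, (derivative P).eval x = P.eval 1 - P.eval 0 := by
    have h := intervalIntegral.integral_deriv_eq_sub (a := (0:ℝ)) (b := 1)
      (f := fun x => P.eval x) (fun x _ => P.differentiableAt)
      (by
        have : (deriv fun x => P.eval x) = fun x => (derivative P).eval x := by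
          funext x; exact P.deriv
        rw [this]; exact (derivative P).continuous.intervalIntegrable _ _)
    have hd : (deriv fun x => P.eval x) = fun x => (derivative P).eval x := by
      funext x; exact P.deriv
    rw [hd] at h
    exact h
  rw [intervalIntegral.integral_congr (fun x _ => heval x), h0, h1,
    intervalIntegral.integral_sub (hc1.const_mul _) (hc2.const_mul _),
    intervalIntegral.integral_const_mul, intervalIntegral.integral_const_mul] at hint
  have : (4 * (j:ℝ) + 6) * J (j + 1) - ((j:ℝ) + 1) * J j = 0 := by
    simpa [J] using hint
  linarith

lemma J_val (k : ℕ) : J k * ((2 * k + 1).factorial : ℝ) = (k.factorial : ℝ) ^ 2 := by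
  induction k with
  | zero => simp [J_zero]
  | succ j ih =>
    have hrec := J_succ j
    have e2 : ((2 * (j + 1) + 1).factorial : ℝ)
        = (2 * (j:ℝ) + 3) * ((2 * (j:ℝ) + 2) * ((2 * j + 1).factorial : ℝ)) := by
      have h : 2 * (j + 1) + 1 = (2 * j + 1) + 1 + 1 := by ring
      rw [h, Nat.factorial_succ, Nat.factorial_succ]
      push_cast; ring
    have e1 : ((j + 1).factorial : ℝ) = ((j:ℝ) + 1) * (j.factorial : ℝ) := by
      rw [Nat.factorial_succ]; push_cast; ring
    rw [e1, e2]
    linear_combination ((2 * (j:ℝ) + 2) * ((2 * j + 1).factorial : ℝ) / 2) * hrec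
      + ((j:ℝ) + 1) ^ 2 * ih

lemma lcJ (k : ℕ) : lc k * J k = 1 / (2 * (k:ℝ) + 1) := by
  have hfd : (k.factorial : ℝ) * ((2 * k).descFactorial k : ℝ) = ((2 * k).factorial : ℝ) := by
    have := Nat.factorial_mul_descFactorial (show k ≤ 2 * k by omega)
    have h2 : 2 * k - k = k := by omega
    rw [h2] at this
    exact_mod_cast congrArg (Nat.cast : ℕ → ℝ) this
  have hsucc : ((2 * k + 1).factorial : ℝ) = (2 * (k:ℝ) + 1) * ((2 * k).factorial : ℝ) := by
    rw [Nat.factorial_succ]; push_cast; ring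
  have hJ := J_val k
  have hkf : (k.factorial : ℝ) ≠ 0 := by positivity
  have h2k1 : (2 * (k:ℝ) + 1) ≠ 0 := by positivity
  have h2kf : ((2 * k).factorial : ℝ) ≠ 0 := by positivity
  rw [hsucc] at hJ
  have hJ' : J k = (k.factorial : ℝ) ^ 2 / ((2 * (k:ℝ) + 1) * ((2 * k).factorial : ℝ)) := by
    rw [eq_div_iff (by positivity)]
    linear_combination hJ
  unfold lc
  rw [hJ']
  field_simp
  linear_combination hfd


lemma continuous_eval (q : ℝ[X]) : Continuous fun x : ℝ => q.eval x := q.continuous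

lemma intInt (q : ℝ[X]) (a b : ℝ) :
    IntervalIntegrable (fun x => q.eval x) volume a b :=
  q.continuous.intervalIntegrable _ _

lemma intInt_mul (q r : ℝ[X]) (a b : ℝ) :
    IntervalIntegrable (fun x => q.eval x * r.eval x) volume a b :=
  (q.continuous.mul r.continuous).intervalIntegrable _ _

/-- Integration by parts for polynomials over `[0,1]`. -/
lemma ibp (P Q : ℝ[X]) :
    ∫ x in (0:ℝ)..1, (derivative P).eval x * Q.eval x
      = P.eval 1 * Q.eval 1 - P.eval 0 * Q.eval 0
        - ∫ x in (0:ℝ)..1, P.eval x * (derivative Q).eval x := by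
  have h := intervalIntegral.integral_deriv_mul_eq_sub
    (a := (0:ℝ)) (b := 1)
    (u := fun x => P.eval x) (v := fun x => Q.eval x)
    (u' := fun x => (derivative P).eval x) (v' := fun x => (derivative Q).eval x)
    (fun x _ => P.hasDerivAt x) (fun x _ => Q.hasDerivAt x)
    (intInt _ _ _) (intInt _ _ _)
  have hsplit := intervalIntegral.integral_add (intInt_mul (derivative P) Q 0 1)
    (intInt_mul P (derivative Q) 0 1)
  rw [hsplit] at h
  linarith

/-- FTC for polynomials over `[0,1]`. -/
lemma ftc (P : ℝ[X]) :
    ∫ x in (0:ℝ)..1, (derivative P).eval x = P.eval 1 - P.eval 0 := by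
  have h := ibp P 1
  simpa using h

lemma dvd_iterate (k j : ℕ) (hj : j ≤ k) :
    (X ^ 2 - X : ℝ[X]) ^ (k - j) ∣ derivative^[j] (rodf k) := by
  induction j with
  | zero => simp [rodf]
  | succ j ih =>
    obtain ⟨r, hr⟩ := ih (Nat.le_of_succ_le hj)
    have hkj : k - j = (k - (j + 1)) + 1 := by omega
    rw [Function.iterate_succ_apply', hr, hkj]
    set g : ℝ[X] := X ^ 2 - X with hg
    set n := k - (j + 1)
    rw [derivative_mul, derivative_pow]
    refine dvd_add ⟨C (((n + 1 : ℕ) : ℝ)) * derivative g * r, ?_⟩ ⟨g * derivative r, ?_⟩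
    · rw [Nat.add_sub_cancel]; ring
    · ring

lemma iter_eval_zero (k j : ℕ) (hj : j < k) :
    (derivative^[j] (rodf k)).eval 0 = 0 := by
  obtain ⟨r, hr⟩ := dvd_iterate k j hj.le
  rw [hr]
  simp [zero_pow (Nat.sub_ne_zero_of_lt hj)]

lemma iter_eval_one (k j : ℕ) (hj : j < k) :
    (derivative^[j] (rodf k)).eval 1 = 0 := by
  obtain ⟨r, hr⟩ := dvd_iterate k j hj.le
  rw [hr]
  simp [zero_pow (Nat.sub_ne_zero_of_lt hj)]

/-- Iterated integration by parts against the Rodrigues kernel. -/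
lemma ibp_iter (k : ℕ) (q : ℝ[X]) :
    ∀ j, j ≤ k →
    ∫ x in (0:ℝ)..1, (derivative^[k] (rodf k)).eval x * q.eval x
      = (-1 : ℝ) ^ j * ∫ x in (0:ℝ)..1,
          (derivative^[k - j] (rodf k)).eval x * (derivative^[j] q).eval x := by
  intro j
  induction j with
  | zero => simp
  | succ j ih =>
    intro hj
    rw [ih (Nat.le_of_succ_le hj)]
    have hkj : k - j = (k - (j + 1)) + 1 := by omega
    have hibp := ibp (derivative^[k - (j+1)] (rodf k)) (derivative^[j] q)
    rw [← Function.iterate_succ_apply' derivative] at hibp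
    rw [hkj, hibp, iter_eval_zero k _ (by omega), iter_eval_one k _ (by omega),
      ← Function.iterate_succ_apply' derivative]
    ring

/-- Orthogonality of `leg k` against polynomials of lower degree. -/
lemma orth (k : ℕ) (q : ℝ[X]) (hq : q.natDegree < k) :
    ∫ x in (0:ℝ)..1, (leg k).eval x * q.eval x = 0 := by
  have : ∀ x : ℝ, (leg k).eval x * q.eval x
      = (k.factorial : ℝ)⁻¹ * ((derivative^[k] (rodf k)).eval x * q.eval x) := by
    intro x; simp [leg]; ring
  rw [intervalIntegral.integral_congr (fun x _ => this x),
    intervalIntegral.integral_const_mul, ibp_iter k q k le_rfl]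
  rw [Polynomial.iterate_derivative_eq_zero hq]
  simp

lemma orth' (k : ℕ) (q : ℝ[X]) (hq : q.natDegree < k) :
    ∫ x in (0:ℝ)..1, q.eval x * (leg k).eval x = 0 := by
  rw [intervalIntegral.integral_congr (g := fun x => (leg k).eval x * q.eval x)
    (fun x _ => mul_comm _ _)]
  exact orth k q hq

lemma rodf_eq (k : ℕ) : rodf k = X ^ k * (X - C 1) ^ k := by
  rw [rodf, XX_eq, mul_pow]

lemma neg_pow_helper (x : ℝ) (k : ℕ) : (x ^ 2 - x) ^ k = (-1 : ℝ) ^ k * (x - x ^ 2) ^ k := by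
  rw [show (x ^ 2 - x) = -(x - x ^ 2) by ring, neg_pow]

lemma norm_leg (k : ℕ) :
    ∫ x in (0:ℝ)..1, ((leg k).eval x) ^ 2 = 1 / (2 * (k:ℝ) + 1) := by
  have hpt : ∀ x : ℝ, ((leg k).eval x) ^ 2
      = (k.factorial : ℝ)⁻¹ * ((derivative^[k] (rodf k)).eval x * (leg k).eval x) := by
    intro x; simp [leg]; ring
  rw [intervalIntegral.integral_congr (fun x _ => hpt x), intervalIntegral.integral_const_mul,
    ibp_iter k (leg k) k le_rfl, iter_deriv_leg]
  have hpt2 : ∀ x : ℝ,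
      (derivative^[k - k] (rodf k)).eval x * (C ((k.factorial : ℝ) * lc k)).eval x
      = ((k.factorial : ℝ) * lc k * (-1 : ℝ) ^ k) * (x - x ^ 2) ^ k := by
    intro x
    rw [Nat.sub_self]
    simp only [Function.iterate_zero_apply, eval_C, rodf, eval_pow, eval_sub, eval_X, eval_pow]
    rw [neg_pow_helper]
    ring
  rw [intervalIntegral.integral_congr (fun x _ => hpt2 x), intervalIntegral.integral_const_mul]
  have hJ : (∫ x in (0:ℝ)..1, (x - x ^ 2) ^ k) = J k := rfl
  rw [hJ]
  have hlcJ := lcJ k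
  have hkf : (k.factorial : ℝ) ≠ 0 := by positivity
  have hsq : (-1 : ℝ) ^ k * (-1 : ℝ) ^ k = 1 := by
    rw [← mul_pow]; norm_num
  have hlcJ' : lc k * J k * (2 * (k:ℝ) + 1) = 1 := by
    rw [hlcJ]; field_simp
  field_simp
  linear_combination (lc k * J k * (2 * (k:ℝ) + 1)) * hsq
    + hlcJ'

lemma iter_mul_eval_one (k n : ℕ) :
    (derivative^[n] (rodf k)).eval 1
      = ∑ i ∈ Finset.range (n + 1),
          (n.choose i : ℝ) * ((k.descFactorial (n - i) : ℝ) * (1:ℝ) ^ (k - (n - i)))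
            * ((k.descFactorial i : ℝ) * (0:ℝ) ^ (k - i)) := by
  rw [rodf_eq, Polynomial.iterate_derivative_mul, eval_finset_sum]
  refine Finset.sum_congr rfl fun i _ => ?_
  rw [Polynomial.iterate_derivative_X_sub_pow, Polynomial.iterate_derivative_X_pow_eq_natCast_mul]
  simp [nsmul_eq_mul]
  ring

lemma iter_mul_eval_zero (k n : ℕ) :
    (derivative^[n] (rodf k)).eval 0
      = ∑ i ∈ Finset.range (n + 1),
          (n.choose i : ℝ) * ((k.descFactorial (n - i) : ℝ) * (0:ℝ) ^ (k - (n - i)))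
            * ((k.descFactorial i : ℝ) * (-1:ℝ) ^ (k - i)) := by
  rw [rodf_eq, Polynomial.iterate_derivative_mul, eval_finset_sum]
  refine Finset.sum_congr rfl fun i _ => ?_
  rw [Polynomial.iterate_derivative_X_sub_pow, Polynomial.iterate_derivative_X_pow_eq_natCast_mul]
  simp [nsmul_eq_mul]
  ring

lemma rodf_iter_eval_one (k : ℕ) : (derivative^[k] (rodf k)).eval 1 = (k.factorial : ℝ) := by
  rw [iter_mul_eval_one, Finset.sum_eq_single k]
  · simp [Nat.descFactorial_self]
  · intro i hi hik
    have h : k - i ≠ 0 := by simp only [Finset.mem_range] at hi; omega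
    simp [zero_pow h]
  · intro h; exact absurd (Finset.self_mem_range_succ k) h

lemma rodf_iter_eval_zero (k : ℕ) :
    (derivative^[k] (rodf k)).eval 0 = (k.factorial : ℝ) * (-1) ^ k := by
  rw [iter_mul_eval_zero, Finset.sum_eq_single 0]
  · simp [Nat.descFactorial_self]
  · intro i hi hik
    have h1 : k - (k - i) ≠ 0 := by simp only [Finset.mem_range] at hi; omega
    simp [zero_pow h1]
  · intro h; exact absurd (by simp : 0 ∈ Finset.range (k + 1)) h

lemma leg_eval_one (k : ℕ) : (leg k).eval 1 = 1 := by
  have hkf : (k.factorial : ℝ) ≠ 0 := by positivity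
  rw [leg, eval_mul, eval_C, rodf_iter_eval_one]
  field_simp

lemma leg_eval_zero (k : ℕ) : (leg k).eval 0 = (-1) ^ k := by
  have hkf : (k.factorial : ℝ) ≠ 0 := by positivity
  rw [leg, eval_mul, eval_C, rodf_iter_eval_zero]
  field_simp

lemma deriv_leg (k : ℕ) :
    derivative (leg k) = C ((k.factorial : ℝ)⁻¹) * derivative^[k + 1] (rodf k) := by
  rw [leg, derivative_C_mul, ← Function.iterate_succ_apply' derivative]

lemma rodf_iter_succ_eval_one (k : ℕ) :
    (derivative^[k + 1] (rodf k)).eval 1 = (k.factorial : ℝ) * ((k : ℝ) * ((k : ℝ) + 1)) := by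
  rw [iter_mul_eval_one, Finset.sum_eq_single k]
  · have h1 : k + 1 - k = 1 := by omega
    have h2 : k - k = 0 := by omega
    rw [h1, h2]
    simp [Nat.descFactorial_self, Nat.choose_succ_self_right]
    ring
  · intro i hi hik
    rcases Nat.lt_or_ge i k with h | h
    · simp [zero_pow (show k - i ≠ 0 by omega)]
    · have hik1 : i = k + 1 := by simp only [Finset.mem_range] at hi; omega
      subst hik1
      have : k + 1 - (k + 1) = 0 := by omega
      rw [this]
      simp [Nat.descFactorial_eq_zero_iff_lt.mpr (Nat.lt_succ_self k)]
  · intro h; exact absurd (by simp only [Finset.mem_range]; omega) h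

lemma rodf_iter_succ_eval_zero (k : ℕ) :
    (derivative^[k + 1] (rodf k)).eval 0
      = (k.factorial : ℝ) * ((-1) ^ (k + 1) * ((k : ℝ) * ((k : ℝ) + 1))) := by
  rw [iter_mul_eval_zero, Finset.sum_eq_single 1]
  · have h1 : k + 1 - 1 = k := by omega
    have h2 : k - k = 0 := by omega
    rw [h1, h2]
    rcases Nat.eq_zero_or_pos k with rfl | hk
    · simp
    · have h3 : k - 1 + 2 = k + 1 := by omega
      simp only [Nat.choose_one_right, Nat.descFactorial_self, Nat.descFactorial_one, pow_zero]
      have h4 : ((-1 : ℝ)) ^ (k - 1) = (-1) ^ (k + 1) := by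
        have : k + 1 = (k - 1) + 2 := by omega
        rw [this, pow_add]
        norm_num
      rw [h4]
      push_cast
      ring
  · intro i hi hik
    rcases Nat.eq_zero_or_pos i with rfl | hipos
    · simp [Nat.descFactorial_eq_zero_iff_lt.mpr (Nat.lt_succ_self k)]
    · have hi2 : 2 ≤ i := by omega
      have hile : i ≤ k + 1 := by simp only [Finset.mem_range] at hi; omega
      have h : k - (k + 1 - i) ≠ 0 := by omega
      simp [zero_pow h]
  · intro h; exact absurd (by simp only [Finset.mem_range]; omega) h

lemma dleg_eval_one (k : ℕ) :
    (derivative (leg k)).eval 1 = (k : ℝ) * ((k : ℝ) + 1) := by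
  have hkf : (k.factorial : ℝ) ≠ 0 := by positivity
  rw [deriv_leg, eval_mul, eval_C, rodf_iter_succ_eval_one]
  field_simp

lemma dleg_eval_zero (k : ℕ) :
    (derivative (leg k)).eval 0 = (-1) ^ (k + 1) * ((k : ℝ) * ((k : ℝ) + 1)) := by
  have hkf : (k.factorial : ℝ) ≠ 0 := by positivity
  rw [deriv_leg, eval_mul, eval_C, rodf_iter_succ_eval_zero]
  field_simp

lemma norm_dleg (k : ℕ) :
    ∫ x in (0:ℝ)..1, ((derivative (leg k)).eval x) ^ 2
      = 2 * (k : ℝ) * ((k : ℝ) + 1) := by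
  rcases Nat.eq_zero_or_pos k with rfl | hk
  · have h0 : leg 0 = C 1 := by
      simp [leg, rodf]
    rw [h0]
    simp
  · have h := ibp (leg k) (derivative (leg k))
    have hdeg : (derivative (derivative (leg k))).natDegree < k := by
      have h1 := natDegree_derivative_le (derivative (leg k))
      have h2 := natDegree_derivative_le (leg k)
      have h3 := natDegree_leg_le k
      omega
    rw [orth k _ hdeg] at h
    have hpt : ∀ x : ℝ, ((derivative (leg k)).eval x) ^ 2
        = (derivative (leg k)).eval x * (derivative (leg k)).eval x := fun x => sq _
    rw [intervalIntegral.integral_congr (fun x _ => hpt x), h,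
      leg_eval_one, leg_eval_zero, dleg_eval_one, dleg_eval_zero]
    have hsign : (-1 : ℝ) ^ k * (-1 : ℝ) ^ (k + 1) = -1 := by
      rw [← pow_add]
      exact Odd.neg_one_pow ⟨k, by ring⟩
    calc 1 * ((k : ℝ) * ((k : ℝ) + 1)) - (-1) ^ k * ((-1) ^ (k + 1) * ((k : ℝ) * ((k : ℝ) + 1))) - 0
        = (k : ℝ) * ((k : ℝ) + 1) - ((-1 : ℝ) ^ k * (-1 : ℝ) ^ (k + 1)) * ((k : ℝ) * ((k : ℝ) + 1)) := by
          ring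
      _ = 2 * (k : ℝ) * ((k : ℝ) + 1) := by rw [hsign]; ring

lemma leg_zero_eq : leg 0 = 1 := by
  simp [leg, rodf]

lemma span (p : ℕ) : ∀ u : ℝ[X], u.natDegree ≤ p →
    ∃ c : ℕ → ℝ, u = ∑ k ∈ Finset.range (p + 1), C (c k) * leg k := by
  induction p with
  | zero =>
    intro u hu
    refine ⟨fun _ => u.coeff 0, ?_⟩
    conv_lhs => rw [eq_C_of_natDegree_le_zero hu]
    simp [leg_zero_eq]
  | succ p ih =>
    intro u hu
    set a := u.coeff (p + 1) / lc (p + 1) with ha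
    have hlc := lc_pos (p + 1)
    have hw : (u - C a * leg (p + 1)).natDegree ≤ p := by
      rw [natDegree_le_iff_coeff_eq_zero]
      intro N hN
      rcases Nat.lt_or_ge (p + 1) N with h | h
      · rw [coeff_sub, coeff_C_mul, coeff_eq_zero_of_natDegree_lt (lt_of_le_of_lt hu h),
          coeff_eq_zero_of_natDegree_lt (lt_of_le_of_lt (natDegree_leg_le _) h)]
        ring
      · have hN1 : N = p + 1 := by omega
        subst hN1
        rw [coeff_sub, coeff_C_mul, coeff_leg, ha]
        field_simp
        ring
    obtain ⟨c, hc⟩ := ih _ hw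
    refine ⟨fun k => if k = p + 1 then a else c k, ?_⟩
    rw [Finset.sum_range_succ]
    have hre : ∑ k ∈ Finset.range (p + 1), C (if k = p + 1 then a else c k) * leg k
        = ∑ k ∈ Finset.range (p + 1), C (c k) * leg k := by
      refine Finset.sum_congr rfl fun k hk => ?_
      have : k ≠ p + 1 := by simp only [Finset.mem_range] at hk; omega
      rw [if_neg this]
    rw [hre, show (fun k => if k = p + 1 then a else c k) (p + 1) = a from by simp, ← hc]
    ring

lemma integ_CS (f g : ℝ[X]) :
    (∫ x in (0:ℝ)..1, f.eval x * g.eval x) ^ 2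
      ≤ (∫ x in (0:ℝ)..1, f.eval x ^ 2) * ∫ x in (0:ℝ)..1, g.eval x ^ 2 := by
  set A := ∫ x in (0:ℝ)..1, f.eval x ^ 2 with hA
  set B := ∫ x in (0:ℝ)..1, f.eval x * g.eval x with hB
  set Cc := ∫ x in (0:ℝ)..1, g.eval x ^ 2 with hC
  have i1 : IntervalIntegrable (fun x => f.eval x ^ 2) volume (0:ℝ) 1 :=
    ((f.continuous).pow 2).intervalIntegrable _ _
  have i2 : IntervalIntegrable (fun x => f.eval x * g.eval x) volume (0:ℝ) 1 :=
    ((f.continuous).mul (g.continuous)).intervalIntegrable _ _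
  have i3 : IntervalIntegrable (fun x => g.eval x ^ 2) volume (0:ℝ) 1 :=
    ((g.continuous).pow 2).intervalIntegrable _ _
  have key : ∀ t : ℝ, 0 ≤ A * (t * t) + (2 * B) * t + Cc := by
    intro t
    have h : ∀ x : ℝ, (t * f.eval x + g.eval x) ^ 2
        = t * t * f.eval x ^ 2 + (2 * t) * (f.eval x * g.eval x) + g.eval x ^ 2 := by
      intro x; ring
    have hint : ∫ x in (0:ℝ)..1, (t * f.eval x + g.eval x) ^ 2
        = t * t * A + (2 * t) * B + Cc := by
      rw [intervalIntegral.integral_congr (fun x _ => h x),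
        intervalIntegral.integral_add ((i1.const_mul _).add (i2.const_mul _)) i3,
        intervalIntegral.integral_add (i1.const_mul _) (i2.const_mul _),
        intervalIntegral.integral_const_mul, intervalIntegral.integral_const_mul]
    have hpos : 0 ≤ ∫ x in (0:ℝ)..1, (t * f.eval x + g.eval x) ^ 2 :=
      intervalIntegral.integral_nonneg zero_le_one (fun x _ => sq_nonneg _)
    rw [hint] at hpos
    linarith
  have hd := discrim_le_zero key
  rw [discrim] at hd
  nlinarith

lemma expand_sq (p : ℕ) (g : ℕ → ℝ[X]) (c : ℕ → ℝ) :
    ∫ x in (0:ℝ)..1, ((∑ k ∈ Finset.range (p + 1), C (c k) * g k).eval x) ^ 2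
      = ∑ j ∈ Finset.range (p + 1), ∑ k ∈ Finset.range (p + 1),
          (c j * c k) * ∫ x in (0:ℝ)..1, (g j).eval x * (g k).eval x := by
  have hpt : ∀ x : ℝ, ((∑ k ∈ Finset.range (p + 1), C (c k) * g k).eval x) ^ 2
      = ∑ j ∈ Finset.range (p + 1), ∑ k ∈ Finset.range (p + 1),
          (c j * c k) * ((g j).eval x * (g k).eval x) := by
    intro x
    rw [eval_finset_sum, sq, Finset.sum_mul_sum]
    refine Finset.sum_congr rfl fun j _ => Finset.sum_congr rfl fun k _ => ?_
    simp only [eval_mul, eval_C]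
    ring
  rw [intervalIntegral.integral_congr (fun x _ => hpt x),
    intervalIntegral.integral_finset_sum (f := fun j x => ∑ k ∈ Finset.range (p + 1),
        (c j * c k) * ((g j).eval x * (g k).eval x)) (fun j _ =>
      (continuous_finset_sum _ fun k _ =>
        continuous_const.mul ((g j).continuous.mul (g k).continuous)).intervalIntegrable _ _)]
  refine Finset.sum_congr rfl fun j _ => ?_
  rw [intervalIntegral.integral_finset_sum (f := fun k x =>
      (c j * c k) * ((g j).eval x * (g k).eval x)) (fun k _ =>
    (continuous_const.mul ((g j).continuous.mul (g k).continuous)).intervalIntegrable _ _)]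
  exact Finset.sum_congr rfl fun k _ => intervalIntegral.integral_const_mul _ _

lemma sum_norm (p : ℕ) (c : ℕ → ℝ) :
    ∫ x in (0:ℝ)..1, ((∑ k ∈ Finset.range (p + 1), C (c k) * leg k).eval x) ^ 2
      = ∑ k ∈ Finset.range (p + 1), (c k) ^ 2 * (1 / (2 * (k:ℝ) + 1)) := by
  rw [expand_sq]
  refine Finset.sum_congr rfl fun j hj => ?_
  rw [Finset.sum_eq_single j]
  · have : ∀ x : ℝ, (leg j).eval x * (leg j).eval x = ((leg j).eval x) ^ 2 := fun x => (sq _).symm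
    rw [intervalIntegral.integral_congr (fun x _ => this x), norm_leg]
    ring
  · intro k hk hkj
    rcases Nat.lt_or_ge k j with h | h
    · rw [orth j (leg k) (lt_of_le_of_lt (natDegree_leg_le k) h), mul_zero]
    · have h' : j < k := by omega
      rw [orth' k (leg j) (lt_of_le_of_lt (natDegree_leg_le j) h'), mul_zero]
  · intro h; exact absurd hj h

lemma sum_formula (p : ℕ) :
    ∑ k ∈ Finset.range (p + 1), (2 * (k:ℝ) * ((k:ℝ) + 1)) * (2 * (k:ℝ) + 1)
      = (p:ℝ) * ((p:ℝ) + 1) ^ 2 * ((p:ℝ) + 2) := by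
  induction p with
  | zero => simp
  | succ n ih =>
    rw [Finset.sum_range_succ, ih]
    push_cast
    ring

theorem oneD (p : ℕ) (u : ℝ[X]) (hu : u.natDegree ≤ p) :
    ∫ x in (0:ℝ)..1, ((derivative u).eval x) ^ 2
      ≤ 12 * (p:ℝ) ^ 4 * ∫ x in (0:ℝ)..1, (u.eval x) ^ 2 := by
  obtain ⟨c, hc⟩ := span p u hu
  have hdu : derivative u = ∑ k ∈ Finset.range (p + 1), C (c k) * derivative (leg k) := by
    rw [hc, derivative_sum]
    exact Finset.sum_congr rfl fun k _ => derivative_C_mul _ _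
  have hA : ∫ x in (0:ℝ)..1, (u.eval x) ^ 2
      = ∑ k ∈ Finset.range (p + 1), (c k) ^ 2 * (1 / (2 * (k:ℝ) + 1)) := by
    rw [hc]; exact sum_norm p c
  have hB : ∫ x in (0:ℝ)..1, ((derivative u).eval x) ^ 2
      = ∑ j ∈ Finset.range (p + 1), ∑ k ∈ Finset.range (p + 1),
          (c j * c k) * ∫ x in (0:ℝ)..1,
            (derivative (leg j)).eval x * (derivative (leg k)).eval x := by
    rw [hdu]; exact expand_sq p (fun k => derivative (leg k)) c
  set D : ℕ → ℝ := fun k => 2 * (k:ℝ) * ((k:ℝ) + 1) with hD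
  have hDnn : ∀ k, (0:ℝ) ≤ D k := fun k => by positivity
  have hcross : ∀ j k, (c j * c k) * (∫ x in (0:ℝ)..1,
        (derivative (leg j)).eval x * (derivative (leg k)).eval x)
      ≤ (|c j| * Real.sqrt (D j)) * (|c k| * Real.sqrt (D k)) := by
    intro j k
    have hCS := integ_CS (derivative (leg j)) (derivative (leg k))
    rw [norm_dleg j, norm_dleg k] at hCS
    set I := ∫ x in (0:ℝ)..1, (derivative (leg j)).eval x * (derivative (leg k)).eval x with hI
    have habs : |I| ≤ Real.sqrt (D j) * Real.sqrt (D k) := by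
      rw [← Real.sqrt_sq_eq_abs, ← Real.sqrt_mul (hDnn j)]
      exact Real.sqrt_le_sqrt hCS
    calc (c j * c k) * I ≤ |(c j * c k) * I| := le_abs_self _
      _ = |c j| * |c k| * |I| := by rw [abs_mul, abs_mul]
      _ ≤ |c j| * |c k| * (Real.sqrt (D j) * Real.sqrt (D k)) := by
          exact mul_le_mul_of_nonneg_left habs (by positivity)
      _ = _ := by ring
  have hsum1 : ∫ x in (0:ℝ)..1, ((derivative u).eval x) ^ 2
      ≤ (∑ k ∈ Finset.range (p + 1), |c k| * Real.sqrt (D k)) ^ 2 := by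
    rw [hB, sq, Finset.sum_mul_sum]
    exact Finset.sum_le_sum fun j _ => Finset.sum_le_sum fun k _ => hcross j k
  have hCS2 := Finset.sum_mul_sq_le_sq_mul_sq (Finset.range (p + 1))
      (fun k => |c k| * Real.sqrt (1 / (2 * (k:ℝ) + 1)))
      (fun k => Real.sqrt (D k * (2 * (k:ℝ) + 1)))
  have hfg : ∀ k : ℕ, (|c k| * Real.sqrt (1 / (2 * (k:ℝ) + 1))) * Real.sqrt (D k * (2 * (k:ℝ) + 1))
      = |c k| * Real.sqrt (D k) := by
    intro k
    have h1 : (0:ℝ) < 2 * (k:ℝ) + 1 := by positivity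
    rw [mul_assoc, ← Real.sqrt_mul (by positivity)]
    congr 2
    field_simp
  have hf2 : ∀ k : ℕ, (|c k| * Real.sqrt (1 / (2 * (k:ℝ) + 1))) ^ 2
      = (c k) ^ 2 * (1 / (2 * (k:ℝ) + 1)) := by
    intro k
    rw [mul_pow, sq_abs, Real.sq_sqrt (by positivity)]
  have hg2 : ∀ k : ℕ, (Real.sqrt (D k * (2 * (k:ℝ) + 1))) ^ 2 = D k * (2 * (k:ℝ) + 1) := by
    intro k
    exact Real.sq_sqrt (by positivity)
  rw [Finset.sum_congr rfl (fun k _ => hfg k)] at hCS2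
  rw [Finset.sum_congr rfl (fun k _ => hf2 k)] at hCS2
  rw [Finset.sum_congr rfl (fun k _ => hg2 k)] at hCS2
  rw [sum_formula] at hCS2
  have hAnn : 0 ≤ ∫ x in (0:ℝ)..1, (u.eval x) ^ 2 :=
    intervalIntegral.integral_nonneg zero_le_one (fun x _ => sq_nonneg _)
  have hpoly : (p:ℝ) * ((p:ℝ) + 1) ^ 2 * ((p:ℝ) + 2) ≤ 12 * (p:ℝ) ^ 4 := by
    rcases Nat.eq_zero_or_pos p with rfl | hp
    · norm_num
    · have h1 : (1:ℝ) ≤ (p:ℝ) := by exact_mod_cast hp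
      have h2 : (p:ℝ)^2 ≤ (p:ℝ)^4 := pow_le_pow_right₀ h1 (by norm_num)
      have h3 : (p:ℝ)^3 ≤ (p:ℝ)^4 := pow_le_pow_right₀ h1 (by norm_num)
      have h4 : (p:ℝ) ≤ (p:ℝ)^4 := by
        have := pow_le_pow_right₀ h1 (show 1 ≤ 4 by norm_num)
        simpa using this
      nlinarith [h2, h3, h4]
  calc ∫ x in (0:ℝ)..1, ((derivative u).eval x) ^ 2
      ≤ (∑ k ∈ Finset.range (p + 1), |c k| * Real.sqrt (D k)) ^ 2 := hsum1
    _ ≤ (∑ k ∈ Finset.range (p + 1), (c k) ^ 2 * (1 / (2 * (k:ℝ) + 1)))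
          * ((p:ℝ) * ((p:ℝ) + 1) ^ 2 * ((p:ℝ) + 2)) := hCS2
    _ = (∫ x in (0:ℝ)..1, (u.eval x) ^ 2) * ((p:ℝ) * ((p:ℝ) + 1) ^ 2 * ((p:ℝ) + 2)) := by
          rw [hA]
    _ ≤ (∫ x in (0:ℝ)..1, (u.eval x) ^ 2) * (12 * (p:ℝ) ^ 4) :=
          mul_le_mul_of_nonneg_left hpoly hAnn
    _ = 12 * (p:ℝ) ^ 4 * ∫ x in (0:ℝ)..1, (u.eval x) ^ 2 := by ring

theorem oneD_scaled (p : ℕ) (α : ℝ) (hα : 1 ≤ α) (u : ℝ[X]) (hu : u.natDegree ≤ p) :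
    ∫ x in (0:ℝ)..α, ((derivative u).eval x) ^ 2
      ≤ 12 * (p:ℝ) ^ 4 * ∫ x in (0:ℝ)..α, (u.eval x) ^ 2 := by
  have hα0 : (0:ℝ) < α := lt_of_lt_of_le one_pos hα
  have hαne : α ≠ 0 := ne_of_gt hα0
  set w : ℝ[X] := u.comp (C α * X) with hw
  have hwdeg : w.natDegree ≤ p := by
    refine (natDegree_comp_le).trans ?_
    have : (C α * X : ℝ[X]).natDegree = 1 := by
      rw [natDegree_C_mul_X _ hαne]
    rw [this, mul_one]
    exact hu
  have hwe : ∀ s : ℝ, w.eval s = u.eval (α * s) := by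
    intro s; simp [hw, eval_comp]
  have hwd : ∀ s : ℝ, (derivative w).eval s = α * (derivative u).eval (α * s) := by
    intro s
    rw [hw, derivative_comp]
    simp [eval_comp]
    try ring
  have h1 := oneD p w hwdeg
  have hsub1 : ∫ x in (0:ℝ)..1, (u.eval (α * x)) ^ 2
      = α⁻¹ * ∫ x in (0:ℝ)..α, (u.eval x) ^ 2 := by
    have := intervalIntegral.integral_comp_mul_left (a := (0:ℝ)) (b := 1)
      (fun x => (u.eval x) ^ 2) hαne
    rw [this]
    simp [smul_eq_mul]
  have hsub2 : ∫ x in (0:ℝ)..1, ((derivative u).eval (α * x)) ^ 2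
      = α⁻¹ * ∫ x in (0:ℝ)..α, ((derivative u).eval x) ^ 2 := by
    have := intervalIntegral.integral_comp_mul_left (a := (0:ℝ)) (b := 1)
      (fun x => ((derivative u).eval x) ^ 2) hαne
    rw [this]
    simp [smul_eq_mul]
  have hL : ∫ x in (0:ℝ)..1, ((derivative w).eval x) ^ 2
      = α ^ 2 * (α⁻¹ * ∫ x in (0:ℝ)..α, ((derivative u).eval x) ^ 2) := by
    rw [← hsub2]
    rw [intervalIntegral.integral_congr (g := fun x => α ^ 2 * ((derivative u).eval (α * x)) ^ 2)
      (fun x _ => by rw [hwd x]; ring)]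
    rw [intervalIntegral.integral_const_mul]
  have hR : ∫ x in (0:ℝ)..1, (w.eval x) ^ 2
      = α⁻¹ * ∫ x in (0:ℝ)..α, (u.eval x) ^ 2 := by
    rw [← hsub1]
    exact intervalIntegral.integral_congr (fun x _ => by rw [hwe x])
  rw [hL, hR] at h1
  have hInn : 0 ≤ ∫ x in (0:ℝ)..α, (u.eval x) ^ 2 :=
    intervalIntegral.integral_nonneg hα0.le (fun x _ => sq_nonneg _)
  have hα2 : 1 ≤ α ^ 2 := one_le_pow₀ hα
  calc ∫ x in (0:ℝ)..α, ((derivative u).eval x) ^ 2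
      = α⁻¹ * (α ^ 2 * (α⁻¹ * ∫ x in (0:ℝ)..α, ((derivative u).eval x) ^ 2)) := by
        field_simp
    _ ≤ α⁻¹ * (12 * (p:ℝ) ^ 4 * (α⁻¹ * ∫ x in (0:ℝ)..α, (u.eval x) ^ 2)) := by
        apply mul_le_mul_of_nonneg_left h1 (by positivity)
    _ = (α⁻¹ * α⁻¹) * (12 * (p:ℝ) ^ 4 * ∫ x in (0:ℝ)..α, (u.eval x) ^ 2) := by ring
    _ ≤ 1 * (12 * (p:ℝ) ^ 4 * ∫ x in (0:ℝ)..α, (u.eval x) ^ 2) := by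
        apply mul_le_mul_of_nonneg_right _ (by positivity)
        rw [← mul_inv]
        apply inv_le_one_of_one_le₀
        nlinarith
    _ = 12 * (p:ℝ) ^ 4 * ∫ x in (0:ℝ)..α, (u.eval x) ^ 2 := one_mul _

/-- Restriction of a multivariate polynomial to a vertical fiber. -/
def fiberPoly (m : ℕ) (v : MvPolynomial (Fin (m + 1)) ℝ) (y : Fin m → ℝ) : ℝ[X] :=
  MvPolynomial.aeval (fun j : Fin (m + 1) =>
    Fin.lastCases Polynomial.X (fun i => Polynomial.C (y i)) j) v

lemma fiberPoly_eval (m : ℕ) (v : MvPolynomial (Fin (m + 1)) ℝ) (y : Fin m → ℝ) (t : ℝ) :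
    (fiberPoly m v y).eval t = MvPolynomial.eval (Fin.snoc y t) v := by
  induction v using MvPolynomial.induction_on with
  | C a => simp [fiberPoly]
  | add q r hq hr =>
    simp only [fiberPoly, map_add, Polynomial.eval_add] at hq hr ⊢
    rw [hq, hr]
  | mul_X q j hq =>
    simp only [fiberPoly, map_mul, Polynomial.eval_mul, MvPolynomial.eval_mul] at hq ⊢
    rw [hq]
    congr 1
    rw [MvPolynomial.aeval_X]
    cases j using Fin.lastCases with
    | last => simp
    | cast i => simp

lemma fiberPoly_natDegree (m : ℕ) (v : MvPolynomial (Fin (m + 1)) ℝ) (y : Fin m → ℝ) :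
    (fiberPoly m v y).natDegree ≤ v.totalDegree := by
  classical
  conv_lhs => rw [fiberPoly, v.as_sum, map_sum]
  refine Polynomial.natDegree_sum_le_of_forall_le _ _ fun s hs => ?_
  rw [MvPolynomial.aeval_monomial]
  refine (Polynomial.natDegree_mul_le).trans ?_
  have h1 : (algebraMap ℝ ℝ[X] (MvPolynomial.coeff s v)).natDegree = 0 := by
    simp [Polynomial.natDegree_C]
  rw [h1, zero_add]
  refine (Polynomial.natDegree_prod_le _ _).trans ?_
  refine le_trans (Finset.sum_le_sum (g := fun j => s j) (fun j _ => ?_)) ?_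
  · show ((Fin.lastCases (motive := fun _ => ℝ[X]) X (fun i => C (y i)) j) ^ (s j)).natDegree ≤ s j
    refine (Polynomial.natDegree_pow_le).trans ?_
    have hg : (Fin.lastCases (motive := fun _ => ℝ[X]) X (fun i => C (y i)) j).natDegree ≤ 1 := by
      cases j using Fin.lastCases with
      | last => simpa using Polynomial.natDegree_X_le
      | cast i => simp
    calc s j * (Fin.lastCases (motive := fun _ => ℝ[X]) X (fun i => C (y i)) j).natDegree
        ≤ s j * 1 := Nat.mul_le_mul_left _ hg
      _ = s j := Nat.mul_one _
  · simpa [Finsupp.sum] using MvPolynomial.le_totalDegree hs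

lemma fiberPoly_derivative (m : ℕ) (v : MvPolynomial (Fin (m + 1)) ℝ) (y : Fin m → ℝ) :
    derivative (fiberPoly m v y) = fiberPoly m (MvPolynomial.pderiv (Fin.last m) v) y := by
  induction v using MvPolynomial.induction_on with
  | C a => simp [fiberPoly]
  | add q r hq hr =>
    simp only [fiberPoly, map_add, derivative_add] at hq hr ⊢
    rw [hq, hr]
  | mul_X q j hq =>
    cases j using Fin.lastCases with
    | last =>
      have hp : MvPolynomial.pderiv (Fin.last m) (q * MvPolynomial.X (Fin.last m))
          = MvPolynomial.pderiv (Fin.last m) q * MvPolynomial.X (Fin.last m) + q := by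
        rw [MvPolynomial.pderiv_mul, MvPolynomial.pderiv_X_self]; ring
      rw [hp]
      simp only [fiberPoly, map_mul, map_add, MvPolynomial.aeval_X, Fin.lastCases_last] at hq ⊢
      rw [derivative_mul, derivative_X, mul_one, hq]
    | cast i =>
      have hne : (Fin.castSucc i) ≠ Fin.last m := (Fin.castSucc_lt_last i).ne
      have hp : MvPolynomial.pderiv (Fin.last m) (q * MvPolynomial.X (Fin.castSucc i))
          = MvPolynomial.pderiv (Fin.last m) q * MvPolynomial.X (Fin.castSucc i) := by
        rw [MvPolynomial.pderiv_mul, MvPolynomial.pderiv_X_of_ne hne, mul_zero, add_zero]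
      rw [hp]
      simp only [fiberPoly, map_mul, MvPolynomial.aeval_X, Fin.lastCases_castSucc] at hq ⊢
      rw [derivative_mul, derivative_C, mul_zero, add_zero, hq]

def SP (m : ℕ) (φ : (Fin m → ℝ) → ℝ) : Set (ℝ × (Fin m → ℝ)) :=
  {z | (∀ i, z.2 i ∈ Set.Icc (0:ℝ) 1) ∧ z.1 ∈ Set.Icc 0 (φ z.2)}

lemma transfer (m : ℕ) (φ : (Fin m → ℝ) → ℝ) (F : (Fin (m + 1) → ℝ) → ℝ) :
    (∫ x in prism m φ, F (fun j => x j))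
      = ∫ z in SP m φ, F (Fin.snoc z.2 z.1)
          ∂((volume : Measure ℝ).prod (volume : Measure (Fin m → ℝ))) := by
  classical
  set π := MeasurableEquiv.piFinSuccAbove (fun _ : Fin (m + 1) => ℝ) (Fin.last m) with hπdef
  have hπ1 : ∀ x : Fin (m + 1) → ℝ, (π x).1 = x (Fin.last m) := fun x => rfl
  have hπ2 : ∀ (x : Fin (m + 1) → ℝ) (j : Fin m), (π x).2 j = x (Fin.castSucc j) := by
    intro x j
    show x ((Fin.last m).succAbove j) = x (Fin.castSucc j)
    rw [Fin.succAbove_last]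
  have hπx : ∀ x : Fin (m + 1) → ℝ,
      (Fin.snoc (π x).2 (π x).1 : Fin (m + 1) → ℝ) = x := by
    intro x; funext j
    cases j using Fin.lastCases with
    | last => rw [Fin.snoc_last, hπ1]
    | cast i => rw [Fin.snoc_castSucc, hπ2]
  have hπ2' : ∀ x : Fin (m + 1) → ℝ, (π x).2 = fun j => x (Fin.castSucc j) := by
    intro x; funext j; exact hπ2 x j
  set e := (MeasurableEquiv.toLp 2 (Fin (m + 1) → ℝ)).symm with hedef
  have hset : e ⁻¹' (π ⁻¹' (SP m φ)) = prism m φ := by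
    ext x
    simp only [Set.mem_preimage]
    show (∀ i, (π (e x)).2 i ∈ Set.Icc (0:ℝ) 1) ∧ (π (e x)).1 ∈ Set.Icc 0 (φ (π (e x)).2) ↔ _
    rw [hπ1, hπ2']
    exact Iff.rfl
  have h2 := (measurePreserving_piFinSuccAbove
      (fun _ : Fin (m + 1) => (volume : Measure ℝ)) (Fin.last m)).setIntegral_preimage_emb
      π.measurableEmbedding (fun z : ℝ × (Fin m → ℝ) => F (Fin.snoc z.2 z.1)) (SP m φ)
  have h1 := (EuclideanSpace.volume_preserving_symm_measurableEquiv_toLp (Fin (m + 1))).setIntegral_preimage_emb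
      e.measurableEmbedding (fun y : Fin (m + 1) → ℝ => F y) (π ⁻¹' (SP m φ))
  calc ∫ x in prism m φ, F (fun j => x j)
      = ∫ x in e ⁻¹' (π ⁻¹' (SP m φ)), F (e x) := by
        rw [hset]
        rfl
    _ = ∫ y in π ⁻¹' (SP m φ), F y := h1
    _ = ∫ x in π ⁻¹' (SP m φ), F (Fin.snoc (π x).2 (π x).1)
          ∂(Measure.pi fun _ : Fin (m + 1) => (volume : Measure ℝ)) := by
        rw [← MeasureTheory.volume_pi]
        simp only [hπx]
    _ = ∫ z in SP m φ, F (Fin.snoc z.2 z.1)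
          ∂((volume : Measure ℝ).prod (Measure.pi fun _ : Fin m => (volume : Measure ℝ))) := h2
    _ = ∫ z in SP m φ, F (Fin.snoc z.2 z.1)
          ∂((volume : Measure ℝ).prod (volume : Measure (Fin m → ℝ))) := by
        rw [← MeasureTheory.volume_pi]

lemma SP_closed (m : ℕ) (φ : (Fin m → ℝ) → ℝ) (hφc : Continuous φ) : IsClosed (SP m φ) := by
  have h1 : IsClosed {z : ℝ × (Fin m → ℝ) | ∀ i, z.2 i ∈ Set.Icc (0:ℝ) 1} := by
    have he : {z : ℝ × (Fin m → ℝ) | ∀ i, z.2 i ∈ Set.Icc (0:ℝ) 1}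
        = ⋂ i, (fun z : ℝ × (Fin m → ℝ) => z.2 i) ⁻¹' (Set.Icc (0:ℝ) 1) := by
      ext z; simp
    rw [he]
    exact isClosed_iInter fun i =>
      isClosed_Icc.preimage ((continuous_apply i).comp continuous_snd)
  have h2 : IsClosed {z : ℝ × (Fin m → ℝ) | z.1 ∈ Set.Icc 0 (φ z.2)} := by
    have he : {z : ℝ × (Fin m → ℝ) | z.1 ∈ Set.Icc 0 (φ z.2)}
        = {z : ℝ × (Fin m → ℝ) | (0:ℝ) ≤ z.1} ∩ {z : ℝ × (Fin m → ℝ) | z.1 ≤ φ z.2} := by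
      ext z; simp [Set.mem_Icc]
    rw [he]
    exact (isClosed_le continuous_const continuous_fst).inter
      (isClosed_le continuous_fst (hφc.comp continuous_snd))
  exact h1.inter h2

lemma SP_bounded (m : ℕ) (φ : (Fin m → ℝ) → ℝ) (L : NNReal) (hL : LipschitzWith L φ) :
    Bornology.IsBounded (SP m φ) := by
  set R : ℝ := 1 + (|φ 0| + L) with hR
  have hRnn : (0:ℝ) ≤ |φ 0| + L := by positivity
  have hsub : SP m φ ⊆ Metric.closedBall 0 R := by
    rintro z ⟨h1, h2⟩
    rw [Metric.mem_closedBall, dist_zero_right]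
    have hz2 : ‖z.2‖ ≤ 1 := by
      rw [pi_norm_le_iff_of_nonneg zero_le_one]
      intro i
      rw [Real.norm_eq_abs, abs_le]
      exact ⟨by linarith [(h1 i).1], (h1 i).2⟩
    have hφz : φ z.2 ≤ |φ 0| + L := by
      have hd := hL.dist_le_mul z.2 0
      rw [Real.dist_eq] at hd
      have hd2 : φ z.2 - φ 0 ≤ (L : ℝ) * dist z.2 0 := le_trans (le_abs_self _) hd
      have hdist : dist z.2 0 ≤ 1 := by rw [dist_zero_right]; exact hz2
      have : φ z.2 - φ 0 ≤ (L : ℝ) := le_trans hd2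
        (by calc (L : ℝ) * dist z.2 0 ≤ (L : ℝ) * 1 :=
              mul_le_mul_of_nonneg_left hdist (NNReal.coe_nonneg L)
            _ = (L : ℝ) := mul_one _)
      have habs : φ 0 ≤ |φ 0| := le_abs_self _
      linarith
    have hz1 : ‖z.1‖ ≤ |φ 0| + L := by
      rw [Real.norm_eq_abs, abs_le]
      constructor
      · linarith [h2.1, hRnn]
      · linarith [h2.2]
    rw [Prod.norm_def]
    apply max_le
    · linarith
    · linarith
  exact Metric.isBounded_closedBall.subset hsub

lemma cont_snoc (m : ℕ) : Continuous fun z : ℝ × (Fin m → ℝ) => (Fin.snoc z.2 z.1 : Fin (m + 1) → ℝ) := by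
  apply continuous_pi
  intro j
  cases j using Fin.lastCases with
  | last =>
    simp only [Fin.snoc_last]
    exact continuous_fst
  | cast i =>
    simp only [Fin.snoc_castSucc]
    exact (continuous_apply i).comp continuous_snd

end VDI
end
end VDIaux

open VDI Polynomial in
/-- **Vertical-derivative inverse estimate on a reference generalized prism**
(estimate `v_y` in the proof of Lemma `basic_H1_L2`).
For every reference generalized prism `K̂ = K̂_φ ⊂ ℝ^d` (`d = m+1 ≥ 2`) and every real
polynomial `v` of total degree at most `p` in `d` variables,
`∫_{K̂} (∂v/∂x_d)² ≤ 12 p⁴ ∫_{K̂} v²`. -/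
theorem vertical_derivative_inverse_estimate_prism
    (m p : ℕ) (hm : 1 ≤ m)
    (φ : (Fin m → ℝ) → ℝ) (hφ : IsRefGenPrism m φ)
    (v : MvPolynomial (Fin (m + 1)) ℝ) (hv : v.totalDegree ≤ p) :
    ∫ x in prism m φ,
        (MvPolynomial.eval (fun j => x j) (MvPolynomial.pderiv (Fin.last m) v)) ^ 2 ≤
      12 * (p : ℝ) ^ 4 * ∫ x in prism m φ, (MvPolynomial.eval (fun j => x j) v) ^ 2 := by
  classical
  obtain ⟨⟨L, hL⟩, hcube, -⟩ := hφ
  have hφc : Continuous φ := hL.continuous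
  have hφ1 : ∀ y : Fin m → ℝ, (∀ i, y i ∈ Set.Icc (0:ℝ) 1) → 1 ≤ φ y := by
    intro y hy
    set x₀ : EuclideanSpace ℝ (Fin (m + 1)) :=
      ((MeasurableEquiv.toLp 2 (Fin (m + 1) → ℝ)).symm).symm (Fin.snoc y 1) with hx₀
    have hmem : x₀ ∈ {x : EuclideanSpace ℝ (Fin (m + 1)) | ∀ i, x i ∈ Set.Icc (0:ℝ) 1} := by
      intro j
      show (Fin.snoc y (1:ℝ) : Fin (m + 1) → ℝ) j ∈ Set.Icc (0:ℝ) 1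
      cases j using Fin.lastCases with
      | last => rw [Fin.snoc_last]; exact ⟨zero_le_one, le_refl 1⟩
      | cast i => rw [Fin.snoc_castSucc]; exact hy i
    have hp := hcube hmem
    have h2 := hp.2
    have hlast : x₀ (Fin.last m) = 1 := by
      show (Fin.snoc y (1:ℝ) : Fin (m + 1) → ℝ) (Fin.last m) = 1
      rw [Fin.snoc_last]
    have hcast : (fun i => x₀ (Fin.castSucc i)) = y := by
      funext i
      show (Fin.snoc y (1:ℝ) : Fin (m + 1) → ℝ) (Fin.castSucc i) = y i
      rw [Fin.snoc_castSucc]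
    rw [hlast, hcast] at h2
    exact h2.2
  set P1 := MvPolynomial.pderiv (Fin.last m) v with hP1
  rw [transfer m φ (fun y => (MvPolynomial.eval y P1) ^ 2),
      transfer m φ (fun y => (MvPolynomial.eval y v) ^ 2)]
  set μpr := (volume : Measure ℝ).prod (volume : Measure (Fin m → ℝ)) with hμpr
  set G1 : ℝ × (Fin m → ℝ) → ℝ :=
    fun z => (MvPolynomial.eval (Fin.snoc z.2 z.1) P1) ^ 2 with hG1
  set G2 : ℝ × (Fin m → ℝ) → ℝ :=
    fun z => (MvPolynomial.eval (Fin.snoc z.2 z.1) v) ^ 2 with hG2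
  have hG1c : Continuous G1 :=
    ((MvPolynomial.continuous_eval (p := P1)).comp (cont_snoc m)).pow 2
  have hG2c : Continuous G2 :=
    ((MvPolynomial.continuous_eval (p := v)).comp (cont_snoc m)).pow 2
  have hScl := SP_closed m φ hφc
  have hSmeas : MeasurableSet (SP m φ) := hScl.measurableSet
  have hcpt : IsCompact (SP m φ) :=
    Metric.isCompact_of_isClosed_isBounded hScl (SP_bounded m φ L hL)
  have hIO1 : IntegrableOn G1 (SP m φ) μpr :=
    ContinuousOn.integrableOn_compact hcpt hG1c.continuousOn
  have hIO2 : IntegrableOn G2 (SP m φ) μpr :=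
    ContinuousOn.integrableOn_compact hcpt hG2c.continuousOn
  have hind1 : Integrable ((SP m φ).indicator G1) μpr := hIO1.integrable_indicator hSmeas
  have hind2 : Integrable ((SP m φ).indicator G2) μpr := hIO2.integrable_indicator hSmeas
  rw [← MeasureTheory.integral_indicator hSmeas (f := G1),
      ← MeasureTheory.integral_indicator hSmeas (f := G2),
      MeasureTheory.integral_prod_symm _ hind1, MeasureTheory.integral_prod_symm _ hind2,
      ← MeasureTheory.integral_const_mul]
  refine MeasureTheory.integral_mono hind1.integral_prod_right
    (hind2.integral_prod_right.const_mul _) fun y => ?_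
  by_cases hy : ∀ i, y i ∈ Set.Icc (0:ℝ) 1
  · have hyφ := hφ1 y hy
    have h0φ : (0:ℝ) ≤ φ y := le_trans zero_le_one hyφ
    have hind_eq : ∀ G : ℝ × (Fin m → ℝ) → ℝ,
        (fun t => ((SP m φ).indicator G) (t, y))
          = (Set.Icc (0:ℝ) (φ y)).indicator (fun t => G (t, y)) := by
      intro G; funext t
      by_cases ht : t ∈ Set.Icc (0:ℝ) (φ y)
      · rw [Set.indicator_of_mem ht,
          Set.indicator_of_mem (show (t, y) ∈ SP m φ from ⟨hy, ht⟩)]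
      · rw [Set.indicator_of_notMem ht,
          Set.indicator_of_notMem (fun hmem => ht hmem.2)]
    show (∫ t, ((SP m φ).indicator G1) (t, y))
        ≤ 12 * (p:ℝ) ^ 4 * ∫ t, ((SP m φ).indicator G2) (t, y)
    rw [hind_eq G1, hind_eq G2, MeasureTheory.integral_indicator measurableSet_Icc,
      MeasureTheory.integral_indicator measurableSet_Icc]
    have e1 : ∫ t in Set.Icc (0:ℝ) (φ y), G1 (t, y)
        = ∫ t in (0:ℝ)..(φ y), ((derivative (fiberPoly m v y)).eval t) ^ 2 := by
      rw [intervalIntegral.integral_of_le h0φ, ← MeasureTheory.integral_Icc_eq_integral_Ioc]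
      refine MeasureTheory.setIntegral_congr_fun measurableSet_Icc fun t _ => ?_
      show (MvPolynomial.eval (Fin.snoc y t) P1) ^ 2 = _
      rw [← fiberPoly_eval, ← fiberPoly_derivative]
    have e2 : ∫ t in Set.Icc (0:ℝ) (φ y), G2 (t, y)
        = ∫ t in (0:ℝ)..(φ y), ((fiberPoly m v y).eval t) ^ 2 := by
      rw [intervalIntegral.integral_of_le h0φ, ← MeasureTheory.integral_Icc_eq_integral_Ioc]
      refine MeasureTheory.setIntegral_congr_fun measurableSet_Icc fun t _ => ?_
      show (MvPolynomial.eval (Fin.snoc y t) v) ^ 2 = _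
      rw [← fiberPoly_eval]
    rw [e1, e2]
    exact oneD_scaled p (φ y) hyφ (fiberPoly m v y)
      ((fiberPoly_natDegree m v y).trans hv)
  · have hz1 : ∀ t : ℝ, ((SP m φ).indicator G1) (t, y) = 0 := fun t =>
      Set.indicator_of_notMem (fun hmem => hy hmem.1) _
    have hz2 : ∀ t : ℝ, ((SP m φ).indicator G2) (t, y) = 0 := fun t =>
      Set.indicator_of_notMem (fun hmem => hy hmem.1) _
    show (∫ t, ((SP m φ).indicator G1) (t, y))
        ≤ 12 * (p:ℝ) ^ 4 * ∫ t, ((SP m φ).indicator G2) (t, y)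
    simp only [hz1, hz2, MeasureTheory.integral_zero, mul_zero]
    exact le_refl 0
end

section
/- Let p ∈ ℕ and let ξ be a real polynomial of degree at most p in one variable, with derivative ξ'. Then ∫_{−1}^{1} (ξ'(x))² (1+x) dx ≤ p(p+1)²(p+2) · ∫_{−1}^{1} ξ(x)² (1+x) dx. -/
open Polynomial intervalIntegral

namespace WPII

/-- interval-integrability of polynomial-built functions -/
lemma contEval (P : Polynomial ℝ) : Continuous fun x : ℝ => P.eval x := P.continuous

lemma intble (P : Polynomial ℝ) : IntervalIntegrable (fun x => P.eval x) MeasureTheory.volume (-1) 1 :=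
  (contEval P).intervalIntegrable _ _

/-- FTC for polynomials -/
lemma pint (P : Polynomial ℝ) :
    ∫ x in (-1:ℝ)..1, (derivative P).eval x = P.eval 1 - P.eval (-1) := by
  apply intervalIntegral.integral_deriv_eq_sub' (fun x => P.eval x)
  · funext x; exact P.deriv
  · intro x _; exact P.differentiable.differentiableAt
  · exact (contEval _).continuousOn

/-- integration by parts for polynomials -/
lemma ibp (A B : Polynomial ℝ) :
    (∫ x in (-1:ℝ)..1, (derivative A).eval x * B.eval x)
      + ∫ x in (-1:ℝ)..1, A.eval x * (derivative B).eval x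
    = (A.eval 1) * (B.eval 1) - (A.eval (-1)) * (B.eval (-1)) := by
  have h := pint (A * B)
  rw [derivative_mul] at h
  simp only [eval_add, eval_mul] at h
  rw [← h, intervalIntegral.integral_add]
  · exact ((contEval (derivative A)).mul (contEval B)).intervalIntegrable _ _
  · exact ((contEval A).mul (contEval (derivative B))).intervalIntegrable _ _

/-- root multiplicity decreases by one under derivative (divisibility form) -/
lemma dvd_derivative {a : ℝ} {m : ℕ} {P : Polynomial ℝ}
    (h : (X - C a) ^ (m+1) ∣ P) : (X - C a) ^ m ∣ derivative P := by
  obtain ⟨Q, rfl⟩ := h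
  rw [derivative_mul, derivative_pow, derivative_X_sub_C, mul_one]
  refine dvd_add ⟨(C ((m:ℝ)+1)) * Q, ?_⟩ ⟨(X - C a) * derivative Q, ?_⟩
  · push_cast
    ring
  · ring

lemma dvd_iterate {a : ℝ} {m i : ℕ} {P : Polynomial ℝ}
    (h : (X - C a) ^ m ∣ P) (hi : i ≤ m) : (X - C a) ^ (m - i) ∣ derivative^[i] P := by
  induction i with
  | zero => simpa using h
  | succ n ih =>
      have hn : n ≤ m := le_of_lt (Nat.lt_of_succ_le hi)
      have h2 : (X - C a) ^ (m - n) ∣ derivative^[n] P := ih hn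
      have : m - n = (m - (n+1)) + 1 := by omega
      rw [this] at h2
      rw [Function.iterate_succ_apply']
      exact dvd_derivative h2

lemma eval_zero_of_dvd {a : ℝ} {m : ℕ} {P : Polynomial ℝ}
    (h : (X - C a) ^ (m+1) ∣ P) : P.eval a = 0 := by
  obtain ⟨Q, rfl⟩ := h
  simp



noncomputable def w (k : ℕ) : Polynomial ℝ := (X - C (-1:ℝ)) ^ (k+1) * (X - C (1:ℝ)) ^ k

noncomputable def S (k : ℕ) : Polynomial ℝ := derivative^[k] (w k)

noncomputable def R (k : ℕ) : Polynomial ℝ := (S k) /ₘ (X - C (-1:ℝ))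

lemma monic_w (k : ℕ) : (w k).Monic :=
  ((monic_X_sub_C _).pow _).mul ((monic_X_sub_C _).pow _)

lemma natDegree_w (k : ℕ) : (w k).natDegree = 2*k+1 := by
  rw [w, natDegree_mul (((monic_X_sub_C _).pow _).ne_zero) (((monic_X_sub_C _).pow _).ne_zero),
    natDegree_pow, natDegree_pow]
  simp only [natDegree_X_sub_C]
  omega

/-- key divisibility: `(X+1)^(k+1-i) ∣ derivative^[i] (w k)` -/
lemma dvd_left (k i : ℕ) (hi : i ≤ k) :
    (X - C (-1:ℝ)) ^ (k + 1 - i) ∣ derivative^[i] (w k) := by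
  have h : (X - C (-1:ℝ)) ^ (k+1) ∣ w k := Dvd.intro _ rfl
  exact dvd_iterate h (by omega)

lemma dvd_right (k i : ℕ) (hi : i ≤ k) :
    (X - C (1:ℝ)) ^ (k - i) ∣ derivative^[i] (w k) := by
  have h : (X - C (1:ℝ)) ^ k ∣ w k := ⟨(X - C (-1:ℝ))^(k+1), mul_comm _ _⟩
  exact dvd_iterate h (by omega)

lemma S_root (k : ℕ) : (S k).eval (-1) = 0 := by
  have := dvd_left k k le_rfl
  have hk : k + 1 - k = 0 + 1 := by omega
  rw [hk] at this
  exact eval_zero_of_dvd this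

lemma S_eq (k : ℕ) : S k = (X - C (-1:ℝ)) * R k :=
  ((mul_divByMonic_eq_iff_isRoot (p := S k) (a := (-1:ℝ))).mpr (S_root k)).symm

lemma natDegree_S (k : ℕ) : (S k).natDegree ≤ k + 1 := by
  have h := natDegree_iterate_derivative (w k) k
  rw [natDegree_w] at h
  have h2 : 2*k+1-k = k+1 := by omega
  rw [h2] at h
  exact h

lemma natDegree_R (k : ℕ) : (R k).natDegree ≤ k := by
  by_cases h : R k = 0
  · simp [h]
  · have := S_eq k
    have hd : (S k).natDegree = 1 + (R k).natDegree := by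
      rw [this, natDegree_mul (X_sub_C_ne_zero _) h, natDegree_X_sub_C]
    have := natDegree_S k
    omega

lemma coeff_S (k : ℕ) : (S k).coeff (k+1) = ((2*k+1).descFactorial k : ℝ) := by
  have h := Polynomial.coeff_iterate_derivative (w k) (k+1) (k := k)
  have h2 : k + 1 + k = 2*k+1 := by omega
  rw [h2] at h
  have h3 : (w k).coeff (2*k+1) = 1 := by
    have := (monic_w k).coeff_natDegree
    rwa [natDegree_w] at this
  rw [h3] at h
  simpa [S] using h

lemma coeff_R (k : ℕ) : (R k).coeff k = ((2*k+1).descFactorial k : ℝ) := by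
  have h := coeff_S k
  rw [S_eq k] at h
  have hexp : ((X - C (-1:ℝ)) * R k).coeff (k+1) = (R k).coeff k + (R k).coeff (k+1) := by
    have h1 : (X - C (-1:ℝ)) = X + 1 := by simp
    rw [h1, add_mul, one_mul, coeff_add, coeff_X_mul]
  have hz : (R k).coeff (k+1) = 0 :=
    coeff_eq_zero_of_natDegree_lt (by have := natDegree_R k; omega)
  rw [hexp, hz, add_zero] at h
  exact h

lemma coeff_R_ne (k : ℕ) : (R k).coeff k ≠ 0 := by
  rw [coeff_R]
  refine Nat.cast_ne_zero.mpr (fun h => ?_)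
  have := Nat.descFactorial_eq_zero_iff_lt.mp h
  omega

lemma natDegree_R_eq (k : ℕ) : (R k).natDegree = k :=
  le_antisymm (natDegree_R k) (le_natDegree_of_ne_zero (coeff_R_ne k))

/-- one step of iterated integration by parts against `w k` -/
lemma step (k j : ℕ) (hj1 : 1 ≤ j) (hjk : j ≤ k) (B : Polynomial ℝ) :
    ∫ x in (-1:ℝ)..1, (derivative^[k-j+1] (w k)).eval x * (derivative^[j-1] B).eval x
    = - ∫ x in (-1:ℝ)..1, (derivative^[k-j] (w k)).eval x * (derivative^[j] B).eval x := by
  have h := ibp (derivative^[k-j] (w k)) (derivative^[j-1] B)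
  have e1 : derivative (derivative^[k-j] (w k)) = derivative^[k-j+1] (w k) :=
    (Function.iterate_succ_apply' _ _ _).symm
  have e2 : derivative (derivative^[j-1] B) = derivative^[j] B := by
    conv_rhs => rw [show j = (j-1)+1 by omega]
    exact (Function.iterate_succ_apply' _ _ _).symm
  have hz1 : (derivative^[k-j] (w k)).eval 1 = 0 := by
    apply eval_zero_of_dvd (m := j - 1)
    have := dvd_right k (k-j) (by omega)
    have he : k - (k - j) = (j-1)+1 := by omega
    rwa [he] at this
  have hz2 : (derivative^[k-j] (w k)).eval (-1) = 0 := by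
    apply eval_zero_of_dvd (m := j)
    have := dvd_left k (k-j) (by omega)
    have he : k + 1 - (k - j) = j+1 := by omega
    rwa [he] at this
  rw [e1, e2, hz1, hz2] at h
  simp only [zero_mul, mul_zero, sub_zero] at h
  linarith

/-- iterated integration by parts -/
lemma engine (k i : ℕ) (hik : i ≤ k) (B : Polynomial ℝ) :
    ∫ x in (-1:ℝ)..1, (S k).eval x * B.eval x
    = (-1:ℝ)^i * ∫ x in (-1:ℝ)..1, (derivative^[k-i] (w k)).eval x * (derivative^[i] B).eval x := by
  induction i with
  | zero => simp [S]
  | succ n ih =>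
      rw [ih (by omega)]
      have hs := step k (n+1) (by omega) hik B
      have e1 : k - (n+1) + 1 = k - n := by omega
      have e2 : n + 1 - 1 = n := by omega
      rw [e1, e2] at hs
      rw [hs]
      ring

/-- full iterated IBP: k-fold -/
lemma engine_full (k : ℕ) (B : Polynomial ℝ) :
    ∫ x in (-1:ℝ)..1, (S k).eval x * B.eval x
    = (-1:ℝ)^k * ∫ x in (-1:ℝ)..1, (w k).eval x * (derivative^[k] B).eval x := by
  have := engine k k le_rfl B
  rwa [Nat.sub_self] at this

/-- orthogonality of `R j` against `S k` for `j < k` -/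
lemma orth_SR (k j : ℕ) (hjk : j < k) :
    ∫ x in (-1:ℝ)..1, (S k).eval x * (R j).eval x = 0 := by
  rw [engine_full]
  have hz : derivative^[k] (R j) = 0 :=
    iterate_derivative_eq_zero (lt_of_le_of_lt (natDegree_R j) hjk)
  simp [hz]

lemma Jbase (m : ℕ) : ∫ x in (-1:ℝ)..1, (x+1)^m = 2^(m+1)/(m+1) := by
  have h := intervalIntegral.integral_comp_add_right (a := (-1:ℝ)) (b := 1) (fun x => x^m) 1
  simp only [neg_add_cancel] at h
  rw [h, integral_pow]
  norm_num

lemma Jrec (m n : ℕ) :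
    ((m:ℝ)+1) * ∫ x in (-1:ℝ)..1, (x+1)^m * (x-1)^(n+1)
    = -((n:ℝ)+1) * ∫ x in (-1:ℝ)..1, (x+1)^(m+1) * (x-1)^n := by
  have h := ibp ((X - C (-1:ℝ))^(m+1)) ((X - C (1:ℝ))^(n+1))
  rw [derivative_X_sub_C_pow, derivative_X_sub_C_pow] at h
  simp only [eval_mul, eval_pow, eval_sub, eval_X, eval_C, eval_natCast, sub_neg_eq_add] at h
  norm_num at h
  have e1 : (∫ x in (-1:ℝ)..1, ((m:ℝ)+1) * (x+1)^m * (x-1)^(n+1))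
      = ((m:ℝ)+1) * ∫ x in (-1:ℝ)..1, (x+1)^m * (x-1)^(n+1) := by
    rw [← intervalIntegral.integral_const_mul]
    congr 1; funext x; ring
  have e2 : (∫ x in (-1:ℝ)..1, (x+1)^(m+1) * (((n:ℝ)+1) * (x-1)^n))
      = ((n:ℝ)+1) * ∫ x in (-1:ℝ)..1, (x+1)^(m+1) * (x-1)^n := by
    rw [← intervalIntegral.integral_const_mul]
    congr 1; funext x; ring
  rw [e1, e2] at h
  linarith

lemma Jval : ∀ (n m : ℕ), ∫ x in (-1:ℝ)..1, (x+1)^m * (x-1)^n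
    = (-1:ℝ)^n * 2^(m+n+1) * (m.factorial * n.factorial) / ((m+n+1).factorial) := by
  intro n
  induction n with
  | zero =>
      intro m
      simp only [pow_zero, mul_one, Nat.factorial]
      rw [Jbase]
      have h1 : (m.factorial : ℝ) ≠ 0 := Nat.cast_ne_zero.mpr (Nat.factorial_ne_zero m)
      have h2 : (m:ℝ) + 1 ≠ 0 := by positivity
      push_cast
      field_simp
  | succ n ih =>
      intro m
      have hrec := Jrec m n
      have hm : ((m:ℝ)+1) ≠ 0 := by positivity
      have hih := ih (m+1)
      have key : ∫ x in (-1:ℝ)..1, (x+1)^m * (x-1)^(n+1)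
          = -((n:ℝ)+1) / ((m:ℝ)+1) * ∫ x in (-1:ℝ)..1, (x+1)^(m+1) * (x-1)^n := by
        field_simp
        linarith [hrec]
      rw [key, hih]
      have e1 : m + 1 + n + 1 = m + (n+1) + 1 := by omega
      rw [e1]
      have hfac : (((m + (n+1) + 1).factorial : ℝ)) ≠ 0 := Nat.cast_ne_zero.mpr (Nat.factorial_ne_zero _)
      rw [Nat.factorial_succ (m), Nat.factorial_succ (n)]
      push_cast
      field_simp
      ring

lemma evS1 (k : ℕ) : (S k).eval 1 = 2^(k+1) * k.factorial := by
  have h : S k = ∑ i ∈ Finset.range (k+1),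
      k.choose i • (derivative^[k-i] ((X - C (-1:ℝ))^(k+1)) * derivative^[i] ((X - C (1:ℝ))^k)) := by
    rw [S, w]; exact Polynomial.iterate_derivative_mul _ _
  rw [h, eval_finset_sum, Finset.sum_eq_single k]
  · rw [Nat.sub_self, Nat.choose_self, Function.iterate_zero_apply,
      iterate_derivative_X_sub_pow_self]
    simp
    norm_num
  · intro i hi hne
    have hik : i < k := by simp at hi; omega
    rw [iterate_derivative_X_sub_pow (c := (1:ℝ))]
    have h2 : ((X - C (1:ℝ)) ^ (k - i)).eval 1 = 0 := by
      rw [eval_pow]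
      simp only [eval_sub, eval_X, eval_C, sub_self]
      exact zero_pow (by omega)
    simp only [eval_smul, eval_mul, h2, mul_zero, smul_zero, smul_eq_mul]
  · intro h; exact absurd (Finset.self_mem_range_succ k) h

lemma derivS (k : ℕ) : derivative (S k) = derivative^[k+1] (w k) :=
  (Function.iterate_succ_apply' _ _ _).symm

lemma evDS1 (k : ℕ) : (derivative (S k)).eval 1 = ((k:ℝ)+1)^2 * k.factorial * 2^k := by
  rw [derivS]
  have h : derivative^[k+1] (w k) = ∑ i ∈ Finset.range (k+2),
      (k+1).choose i • (derivative^[k+1-i] ((X - C (-1:ℝ))^(k+1)) * derivative^[i] ((X - C (1:ℝ))^k)) := by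
    rw [w]; exact Polynomial.iterate_derivative_mul _ _
  rw [h, eval_finset_sum, Finset.sum_eq_single k]
  · have e1 : k + 1 - k = 1 := by omega
    rw [e1, iterate_derivative_X_sub_pow_self, Function.iterate_one, derivative_X_sub_C_pow]
    simp
    push_cast
    ring
  · intro i hi hne
    rcases Nat.lt_or_ge i k with hik | hik
    · rw [iterate_derivative_X_sub_pow (c := (1:ℝ))]
      have h2 : ((X - C (1:ℝ)) ^ (k - i)).eval 1 = 0 := by
        rw [eval_pow]
        simp only [eval_sub, eval_X, eval_C, sub_self]
        exact zero_pow (by omega)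
      simp only [eval_smul, eval_mul, h2, mul_zero, smul_zero, smul_eq_mul]
    · have hik2 : i = k + 1 := by simp at hi; omega
      subst hik2
      have hz : derivative^[k+1] ((X - C (1:ℝ))^k) = 0 := by
        apply iterate_derivative_eq_zero
        rw [natDegree_pow, natDegree_X_sub_C]
        omega
      rw [hz, mul_zero, smul_zero, eval_zero]
  · intro h; exact absurd (by simp : k ∈ Finset.range (k+2)) h

lemma evDSm1 (k : ℕ) : (derivative (S k)).eval (-1) = (-2:ℝ)^k * (k+1).factorial := by
  rw [derivS]
  have h : derivative^[k+1] (w k) = ∑ i ∈ Finset.range (k+2),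
      (k+1).choose i • (derivative^[k+1-i] ((X - C (-1:ℝ))^(k+1)) * derivative^[i] ((X - C (1:ℝ))^k)) := by
    rw [w]; exact Polynomial.iterate_derivative_mul _ _
  rw [h, eval_finset_sum, Finset.sum_eq_single 0]
  · rw [Nat.sub_zero, iterate_derivative_X_sub_pow_self, Function.iterate_zero_apply]
    simp
    ring
  · intro i hi hne
    have hik : 0 < i ∧ i ≤ k + 1 := by simp at hi; omega
    rw [iterate_derivative_X_sub_pow (c := (-1:ℝ))]
    have h2 : ((X - C (-1:ℝ)) ^ (k + 1 - (k + 1 - i))).eval (-1) = 0 := by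
      rw [eval_pow]
      simp only [eval_sub, eval_X, eval_C, sub_neg_eq_add, neg_add_cancel]
      exact zero_pow (by omega)
    simp only [eval_smul, eval_mul, h2, zero_mul, smul_zero, smul_eq_mul, mul_zero]
  · intro h; exact absurd (by simp : 0 ∈ Finset.range (k+2)) h

lemma evR1 (k : ℕ) : (R k).eval 1 = 2^k * k.factorial := by
  have h := evS1 k
  rw [S_eq] at h
  simp only [eval_mul, eval_sub, eval_X, eval_C, sub_neg_eq_add] at h
  norm_num at h
  rw [pow_succ] at h
  nlinarith [h]

lemma derivS_eq (k : ℕ) : derivative (S k) = R k + (X - C (-1:ℝ)) * derivative (R k) := by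
  rw [S_eq, derivative_mul]
  simp

lemma evRm1 (k : ℕ) : (R k).eval (-1) = (-2:ℝ)^k * (k+1).factorial := by
  have h := evDSm1 k
  rw [derivS_eq] at h
  simp only [eval_add, eval_mul, eval_sub, eval_X, eval_C, sub_neg_eq_add] at h
  norm_num at h
  exact h

lemma evDR1 (k : ℕ) : 2 * (derivative (R k)).eval 1 = (((k:ℝ)+1)^2 - 1) * k.factorial * 2^k := by
  have h := evDS1 k
  rw [derivS_eq] at h
  simp only [eval_add, eval_mul, eval_sub, eval_X, eval_C, sub_neg_eq_add] at h
  norm_num at h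
  rw [evR1] at h
  push_cast at h ⊢
  nlinarith [h]

/-- the weighted bilinear form -/
noncomputable def Bf (f g : Polynomial ℝ) : ℝ := ∫ x in (-1:ℝ)..1, f.eval x * g.eval x * (1+x)

lemma eval_w (k : ℕ) (x : ℝ) : (w k).eval x = (x+1)^(k+1) * (x-1)^k := by
  simp [w, eval_mul, eval_pow, sub_neg_eq_add]

lemma intw (k : ℕ) : ∫ x in (-1:ℝ)..1, (w k).eval x
    = (-1:ℝ)^k * 2^(2*k+2) * ((k+1).factorial * k.factorial) / ((2*k+2).factorial) := by
  have e : (fun x : ℝ => (w k).eval x) = fun x : ℝ => (x+1)^(k+1) * (x-1)^k := by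
    funext x; exact eval_w k x
  rw [e, Jval k (k+1)]
  have e2 : k + 1 + k + 1 = 2*k+2 := by omega
  rw [e2]

lemma iterDk (k : ℕ) :
    derivative^[k] (R k) = C ((k.factorial : ℝ) * ((2*k+1).descFactorial k : ℝ)) := by
  have hd : (derivative^[k] (R k)).natDegree ≤ 0 := by
    have := natDegree_iterate_derivative (R k) k
    rw [natDegree_R_eq] at this
    omega
  rw [eq_C_of_natDegree_le_zero hd]
  congr 1
  rw [coeff_iterate_derivative]
  rw [zero_add, Nat.descFactorial_self, coeff_R]
  simp [mul_comm]

lemma BfRR (k : ℕ) : Bf (R k) (R k)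
    = ((k.factorial:ℝ) * ((2*k+1).descFactorial k : ℝ)) * ((-1:ℝ)^k * ((-1:ℝ)^k * 2^(2*k+2) * ((k+1).factorial * k.factorial) / ((2*k+2).factorial))) := by
  have e : (fun x : ℝ => (R k).eval x * (R k).eval x * (1+x))
      = fun x : ℝ => (S k).eval x * (R k).eval x := by
    funext x
    rw [S_eq]
    simp only [eval_mul, eval_sub, eval_X, eval_C, sub_neg_eq_add]
    ring
  rw [Bf, e, engine_full, iterDk]
  rw [show (fun x : ℝ => (w k).eval x * (C ((k.factorial : ℝ) * ((2*k+1).descFactorial k : ℝ))).eval x)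
      = fun x : ℝ => (w k).eval x * ((k.factorial : ℝ) * ((2*k+1).descFactorial k : ℝ)) from by
    funext x; simp]
  rw [intervalIntegral.integral_mul_const, intw]
  ring

/-- the norm value: `∫ R_k² (1+x) = 2^(2k+1) (k!)² / (k+1)` -/
lemma hval (k : ℕ) : Bf (R k) (R k) = 2^(2*k+1) * (k.factorial:ℝ)^2 / ((k:ℝ)+1) := by
  rw [BfRR]
  have hsign : (-1:ℝ)^k * (-1:ℝ)^k = 1 := by
    rw [← pow_add]
    exact Even.neg_one_pow ⟨k, by ring⟩
  have hD : ((k+1).factorial : ℝ) * ((2*k+1).descFactorial k : ℝ) = ((2*k+1).factorial : ℝ) := by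
    rw [← Nat.cast_mul]
    congr 1
    have := Nat.factorial_mul_descFactorial (show k ≤ 2*k+1 by omega)
    have e : 2*k+1-k = k+1 := by omega
    rw [e] at this
    exact this
  have hF : ((2*k+2).factorial : ℝ) = ((2*k+2):ℝ) * ((2*k+1).factorial:ℝ) := by
    have : (2*k+2) = (2*k+1) + 1 := by omega
    rw [this, Nat.factorial_succ]
    push_cast
    ring
  have h1 : ((2*k+1).factorial : ℝ) ≠ 0 := Nat.cast_ne_zero.mpr (Nat.factorial_ne_zero _)
  have h2 : ((k:ℝ)+1) ≠ 0 := by positivity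
  rw [hF]
  trans (k.factorial:ℝ)^2 * (((k+1).factorial : ℝ) * ((2*k+1).descFactorial k : ℝ))
      * ((-1:ℝ)^k * (-1:ℝ)^k) * 2^(2*k+2) / ((2*(k:ℝ)+2) * ((2*k+1).factorial : ℝ))
  · ring
  · rw [hD, hsign, div_eq_div_iff (mul_ne_zero (by positivity) h1) h2]
    ring

/-- derivative norm: `∫ (R_k')² (1+x) = (3/2) k (k+2) 4^k (k!)²` -/
lemma Nval (k : ℕ) : Bf (derivative (R k)) (derivative (R k))
    = 3/2 * (k:ℝ) * ((k:ℝ)+2) * 4^k * (k.factorial:ℝ)^2 := by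
  -- split the integrand using (x+1) R' = (S)' - R
  have e : (fun x : ℝ => (derivative (R k)).eval x * (derivative (R k)).eval x * (1+x))
      = fun x : ℝ => (derivative (R k)).eval x * (derivative (S k)).eval x
          - (derivative (R k)).eval x * (R k).eval x := by
    funext x
    rw [derivS_eq]
    simp only [eval_add, eval_mul, eval_sub, eval_X, eval_C, sub_neg_eq_add]
    ring
  rw [Bf, e, intervalIntegral.integral_sub
    (f := fun x => (derivative (R k)).eval x * (derivative (S k)).eval x)
    (g := fun x => (derivative (R k)).eval x * (R k).eval x)
    (((contEval _).mul (contEval _)).intervalIntegrable _ _)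
    (((contEval _).mul (contEval _)).intervalIntegrable _ _)]
  -- part A : ∫ R' R = (R(1)² - R(-1)²)/2
  have hA : (∫ x in (-1:ℝ)..1, (derivative (R k)).eval x * (R k).eval x)
      = ((R k).eval 1 ^ 2 - (R k).eval (-1) ^ 2) / 2 := by
    have hp := pint (R k * R k)
    have e2 : (fun x : ℝ => (derivative (R k * R k)).eval x)
        = fun x : ℝ => 2 * ((derivative (R k)).eval x * (R k).eval x) := by
      funext x
      rw [derivative_mul]
      simp only [eval_add, eval_mul]
      ring
    rw [e2, intervalIntegral.integral_const_mul] at hp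
    simp only [eval_mul] at hp
    linarith
  -- part B : ∫ R' S' = S(1) R'(1)
  have hB : (∫ x in (-1:ℝ)..1, (derivative (R k)).eval x * (derivative (S k)).eval x)
      = (2:ℝ)^(k+1) * k.factorial * (derivative (R k)).eval 1 := by
    have hp := ibp (S k) (derivative (R k))
    have hz : (∫ x in (-1:ℝ)..1, (S k).eval x * (derivative (derivative (R k))).eval x) = 0 := by
      have e3 : derivative (derivative (R k)) = derivative^[2] (R k) := rfl
      rw [e3, engine_full]
      have e4 : derivative^[k] (derivative^[2] (R k)) = derivative^[k+2] (R k) :=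
        (Function.iterate_add_apply derivative k 2 (R k)).symm
      have hz2 : derivative^[k+2] (R k) = 0 :=
        iterate_derivative_eq_zero (by rw [natDegree_R_eq]; omega)
      rw [e4, hz2]
      simp
    rw [hz, add_zero, S_root, evS1] at hp
    simp only [zero_mul, sub_zero] at hp
    rw [show (∫ x in (-1:ℝ)..1, (derivative (R k)).eval x * (derivative (S k)).eval x)
        = ∫ x in (-1:ℝ)..1, (derivative (S k)).eval x * (derivative (R k)).eval x from by
      congr 1; funext x; ring]
    exact hp
  rw [hA, hB]
  have hDR := evDR1 k
  have hR1 := evR1 k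
  have hRm1 := evRm1 k
  rw [hR1, hRm1]
  have hp1 : ((-2:ℝ)^k)^2 = 4^k := by
    rw [← pow_mul, mul_comm k 2, pow_mul]; norm_num
  have hp2 : ((2:ℝ)^k)^2 = 4^k := by
    rw [← pow_mul, mul_comm k 2, pow_mul]; norm_num
  rw [mul_pow, mul_pow, hp1, hp2, pow_succ]
  have h4 : (2:ℝ)^(k*2) = 4^k := by
    rw [pow_mul]; exact hp2
  have hfs2 : (((k+1).factorial:ℝ))^2 = ((k:ℝ)+1)^2 * (k.factorial:ℝ)^2 := by
    rw [Nat.factorial_succ]; push_cast; ring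
  push_cast at hDR ⊢
  linear_combination ((2:ℝ)^k * (k.factorial:ℝ)) * hDR
    + (((k:ℝ)^2+2*(k:ℝ)) * (k.factorial:ℝ)^2) * h4 + ((4:ℝ)^k/2) * hfs2

lemma contBf (f g : Polynomial ℝ) : Continuous fun x : ℝ => f.eval x * g.eval x * (1+x) :=
  ((contEval f).mul (contEval g)).mul (continuous_const.add continuous_id)

lemma Bf_comm (f g : Polynomial ℝ) : Bf f g = Bf g f := by
  rw [Bf, Bf]
  congr 1; funext x; ring

lemma Bf_orth_lt {j k : ℕ} (h : j < k) : Bf (R j) (R k) = 0 := by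
  rw [Bf]
  rw [show (fun x : ℝ => (R j).eval x * (R k).eval x * (1+x))
      = fun x : ℝ => (S k).eval x * (R j).eval x from by
    funext x
    rw [S_eq]
    simp only [eval_mul, eval_sub, eval_X, eval_C, sub_neg_eq_add]
    ring]
  exact orth_SR k j h

lemma Bf_orth {j k : ℕ} (h : j ≠ k) : Bf (R j) (R k) = 0 := by
  rcases lt_or_gt_of_ne h with h1 | h1
  · exact Bf_orth_lt h1
  · rw [Bf_comm]; exact Bf_orth_lt h1

lemma Bf_self_nonneg (f : Polynomial ℝ) : 0 ≤ Bf f f := by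
  apply intervalIntegral.integral_nonneg (by norm_num : (-1:ℝ) ≤ 1)
  intro x hx
  have : 0 ≤ 1 + x := by linarith [hx.1]
  nlinarith [mul_self_nonneg (f.eval x)]

lemma Bf_sum_left (s : Finset ℕ) (c : ℕ → ℝ) (f : ℕ → Polynomial ℝ) (g : Polynomial ℝ) :
    Bf (∑ i ∈ s, C (c i) * f i) g = ∑ i ∈ s, c i * Bf (f i) g := by
  rw [Bf]
  rw [show (fun x : ℝ => (∑ i ∈ s, C (c i) * f i).eval x * g.eval x * (1+x))
      = fun x : ℝ => ∑ i ∈ s, c i * ((f i).eval x * g.eval x * (1+x)) from by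
    funext x
    rw [eval_finset_sum, Finset.sum_mul, Finset.sum_mul]
    refine Finset.sum_congr rfl fun i _ => ?_
    simp only [eval_mul, eval_C]
    ring]
  rw [intervalIntegral.integral_finset_sum]
  · exact Finset.sum_congr rfl fun i _ => intervalIntegral.integral_const_mul _ _
  · intro i _
    exact (continuous_const.mul (contBf (f i) g)).intervalIntegrable _ _

/-- Cauchy–Schwarz for the form `Bf` -/
lemma Bf_CS (f g : Polynomial ℝ) : |Bf f g| ≤ Real.sqrt (Bf f f) * Real.sqrt (Bf g g) := by
  have key : ∀ t : ℝ, 0 ≤ (Bf g g) * (t*t) + (2 * Bf f g) * t + Bf f f := by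
    intro t
    have h0 : 0 ≤ ∫ x in (-1:ℝ)..1,
        (f.eval x + t * g.eval x) * (f.eval x + t * g.eval x) * (1+x) := by
      apply intervalIntegral.integral_nonneg (by norm_num : (-1:ℝ) ≤ 1)
      intro x hx
      have : 0 ≤ 1 + x := by linarith [hx.1]
      nlinarith [mul_self_nonneg (f.eval x + t * g.eval x)]
    have hsplit : (∫ x in (-1:ℝ)..1,
        (f.eval x + t * g.eval x) * (f.eval x + t * g.eval x) * (1+x))
        = Bf f f + (∫ x in (-1:ℝ)..1, (2*t) * (f.eval x * g.eval x * (1+x)))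
          + ∫ x in (-1:ℝ)..1, (t*t) * (g.eval x * g.eval x * (1+x)) := by
      rw [Bf, ← intervalIntegral.integral_add
          (g := fun x => (2*t) * (f.eval x * g.eval x * (1+x)))
          ((contBf f f).intervalIntegrable _ _)
          ((continuous_const.mul (contBf f g)).intervalIntegrable _ _),
        ← intervalIntegral.integral_add
          (f := fun x => f.eval x * f.eval x * (1+x) + (2*t) * (f.eval x * g.eval x * (1+x)))
          (g := fun x => (t*t) * (g.eval x * g.eval x * (1+x)))
          (((contBf f f).add (continuous_const.mul (contBf f g))).intervalIntegrable _ _)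
          ((continuous_const.mul (contBf g g)).intervalIntegrable _ _)]
      congr 1; funext x; ring
    rw [hsplit, intervalIntegral.integral_const_mul, intervalIntegral.integral_const_mul] at h0
    rw [← Bf, ← Bf] at h0
    linarith
  have hd := discrim_le_zero key
  rw [discrim] at hd
  have hsq : (Bf f g)^2 ≤ (Bf f f) * (Bf g g) := by nlinarith
  have h1 : |Bf f g| = Real.sqrt ((Bf f g)^2) := (Real.sqrt_sq_eq_abs _).symm
  rw [h1, ← Real.sqrt_mul (Bf_self_nonneg f)]
  exact Real.sqrt_le_sqrt hsq

lemma R_zero : R 0 = 1 := by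
  have h := S_eq 0
  have h2 : S 0 = (X - C (-1:ℝ)) * 1 := by
    rw [S, Function.iterate_zero_apply, w]
    simp
  rw [h2] at h
  exact (mul_left_cancel₀ (X_sub_C_ne_zero (-1:ℝ)) h).symm

/-- expansion of a polynomial in the basis R -/
lemma expand : ∀ (n : ℕ) (f : Polynomial ℝ), f.natDegree ≤ n →
    ∃ c : ℕ → ℝ, f = ∑ k ∈ Finset.range (n+1), C (c k) * R k := by
  intro n
  induction n with
  | zero =>
      intro f hf
      refine ⟨fun _ => f.coeff 0, ?_⟩
      rw [Finset.sum_range_one, R_zero, mul_one]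
      exact eq_C_of_natDegree_le_zero hf
  | succ n ih =>
      intro f hf
      set a := f.coeff (n+1) / ((2*(n+1)+1).descFactorial (n+1) : ℝ) with ha
      set g := f - C a * R (n+1) with hg
      have hne : (((2*(n+1)+1).descFactorial (n+1)) : ℝ) ≠ 0 := by
        refine Nat.cast_ne_zero.mpr (fun hz => ?_)
        have := Nat.descFactorial_eq_zero_iff_lt.mp hz
        omega
      have hcoeff : g.coeff (n+1) = 0 := by
        rw [hg, coeff_sub, coeff_C_mul, coeff_R, ha, div_mul_cancel₀ _ hne, sub_self]
      have hgdeg : g.natDegree ≤ n := by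
        rw [natDegree_le_iff_coeff_eq_zero]
        intro N hN
        rcases Nat.lt_or_ge (n+1) N with h1 | h1
        · rw [hg, coeff_sub]
          have e1 : f.coeff N = 0 := coeff_eq_zero_of_natDegree_lt (lt_of_le_of_lt hf h1)
          have e2 : (C a * R (n+1)).coeff N = 0 := by
            apply coeff_eq_zero_of_natDegree_lt
            exact lt_of_le_of_lt (le_trans (natDegree_C_mul_le _ _) (natDegree_R (n+1))) h1
          rw [e1, e2, sub_zero]
        · have : N = n+1 := by omega
          rw [this]; exact hcoeff
      obtain ⟨c, hc⟩ := ih g hgdeg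
      refine ⟨fun k => if k = n+1 then a else c k, ?_⟩
      rw [Finset.sum_range_succ]
      dsimp only
      rw [if_pos rfl]
      have : ∑ k ∈ Finset.range (n+1), C (if k = n+1 then a else c k) * R k
          = ∑ k ∈ Finset.range (n+1), C (c k) * R k := by
        refine Finset.sum_congr rfl fun k hk => ?_
        have : k ≠ n+1 := by simp at hk; omega
        rw [if_neg this]
      rw [this, ← hc, hg]
      ring

noncomputable def Hv (k : ℕ) : ℝ := 2^(2*k+1) * (k.factorial:ℝ)^2 / ((k:ℝ)+1)

lemma Hv_pos (k : ℕ) : 0 < Hv k := by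
  rw [Hv]
  have : (0:ℝ) < (k.factorial:ℝ) := Nat.cast_pos.mpr (Nat.factorial_pos k)
  positivity

lemma NH (k : ℕ) : Bf (derivative (R k)) (derivative (R k))
    = (3/4*(k:ℝ)*((k:ℝ)+1)*((k:ℝ)+2)) * Hv k := by
  rw [Nval, Hv]
  have h2 : (2:ℝ)^(2*k+1) = 4^k * 2 := by
    rw [pow_succ, pow_mul]; norm_num
  have h3 : ((k:ℝ)+1) ≠ 0 := by positivity
  rw [h2]
  field_simp
  ring

lemma Parseval (p : ℕ) (c : ℕ → ℝ) :
    Bf (∑ k ∈ Finset.range (p+1), C (c k) * R k) (∑ k ∈ Finset.range (p+1), C (c k) * R k)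
    = ∑ k ∈ Finset.range (p+1), (c k)^2 * Hv k := by
  rw [Bf_sum_left]
  refine Finset.sum_congr rfl fun j hj => ?_
  rw [Bf_comm, Bf_sum_left]
  rw [Finset.sum_eq_single j]
  · rw [hval, Hv]
    ring
  · intro i _ hne
    rw [Bf_orth hne, mul_zero]
  · intro h; exact absurd hj h

lemma sum3 (p : ℕ) : ∑ k ∈ Finset.range (p+1), (3/4*(k:ℝ)*((k:ℝ)+1)*((k:ℝ)+2))
    = 3/16*(p:ℝ)*((p:ℝ)+1)*((p:ℝ)+2)*((p:ℝ)+3) := by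
  induction p with
  | zero => simp
  | succ n ih =>
      rw [Finset.sum_range_succ, ih]
      push_cast
      ring

end WPII

open WPII Polynomial in
/-- **Weighted one-dimensional Bernstein-type inverse inequality** (Lemma
`new_lemma_inverse`).
For every `p ∈ ℕ` and every real polynomial `ξ` of degree at most `p`,
`∫_{-1}^{1} (ξ'(x))² (1+x) dx ≤ p(p+1)²(p+2) ∫_{-1}^{1} ξ(x)² (1+x) dx`. -/
theorem weighted_polynomial_inverse_inequality
    (p : ℕ) (ξ : Polynomial ℝ) (hdeg : ξ.natDegree ≤ p) :
    ∫ x in (-1 : ℝ)..1, (ξ.derivative.eval x) ^ 2 * (1 + x) ≤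
      (p : ℝ) * ((p : ℝ) + 1) ^ 2 * ((p : ℝ) + 2) *
        ∫ x in (-1 : ℝ)..1, (ξ.eval x) ^ 2 * (1 + x) := by
  obtain ⟨c, hξ⟩ := expand p ξ hdeg
  set T := Finset.range (p+1) with hT
  set Nv : ℕ → ℝ := fun k => Bf (derivative (R k)) (derivative (R k)) with hNv
  have eL : (∫ x in (-1 : ℝ)..1, (ξ.derivative.eval x) ^ 2 * (1 + x))
      = Bf (derivative ξ) (derivative ξ) := by
    rw [Bf]; congr 1; funext x; ring
  have eR : (∫ x in (-1 : ℝ)..1, (ξ.eval x) ^ 2 * (1 + x)) = Bf ξ ξ := by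
    rw [Bf]; congr 1; funext x; ring
  rw [eL, eR]
  have hDξ : derivative ξ = ∑ k ∈ T, C (c k) * derivative (R k) := by
    rw [hξ, map_sum]
    exact Finset.sum_congr rfl fun k _ => derivative_C_mul _ _
  have hPar : Bf ξ ξ = ∑ k ∈ T, (c k)^2 * Hv k := by
    rw [hξ]; exact Parseval p c
  -- Step 1 : triangle-type bound on the left side
  have hLb : Bf (derivative ξ) (derivative ξ)
      ≤ (∑ k ∈ T, |c k| * Real.sqrt (Nv k))^2 := by
    rw [hDξ, Bf_sum_left]
    have e : ∀ j ∈ T, c j * Bf (derivative (R j)) (∑ k ∈ T, C (c k) * derivative (R k))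
        = ∑ k ∈ T, c j * (c k * Bf (derivative (R k)) (derivative (R j))) := by
      intro j _
      rw [Bf_comm, Bf_sum_left, Finset.mul_sum]
    rw [Finset.sum_congr rfl e, sq, Finset.sum_mul_sum]
    refine Finset.sum_le_sum fun j _ => Finset.sum_le_sum fun k _ => ?_
    have h1 : |Bf (derivative (R k)) (derivative (R j))|
        ≤ Real.sqrt (Nv k) * Real.sqrt (Nv j) := Bf_CS _ _
    calc c j * (c k * Bf (derivative (R k)) (derivative (R j)))
        ≤ |c j * (c k * Bf (derivative (R k)) (derivative (R j)))| := le_abs_self _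
      _ = |c j| * (|c k| * |Bf (derivative (R k)) (derivative (R j))|) := by
          rw [abs_mul, abs_mul]
      _ ≤ |c j| * (|c k| * (Real.sqrt (Nv k) * Real.sqrt (Nv j))) := by
          have h2 : |c k| * |Bf (derivative (R k)) (derivative (R j))|
              ≤ |c k| * (Real.sqrt (Nv k) * Real.sqrt (Nv j)) :=
            mul_le_mul_of_nonneg_left h1 (abs_nonneg _)
          exact mul_le_mul_of_nonneg_left h2 (abs_nonneg _)
      _ = |c j| * Real.sqrt (Nv j) * (|c k| * Real.sqrt (Nv k)) := by ring
  -- Step 2 : Cauchy-Schwarz for sums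
  have hStep2 : (∑ k ∈ T, |c k| * Real.sqrt (Nv k))^2
      ≤ (∑ k ∈ T, (c k)^2 * Hv k) * (∑ k ∈ T, 3/4*(k:ℝ)*((k:ℝ)+1)*((k:ℝ)+2)) := by
    have key := Finset.sum_mul_sq_le_sq_mul_sq T
      (fun k => |c k| * Real.sqrt (Hv k))
      (fun k => Real.sqrt (3/4*(k:ℝ)*((k:ℝ)+1)*((k:ℝ)+2)))
    have e1 : ∑ k ∈ T, (|c k| * Real.sqrt (Hv k)) * Real.sqrt (3/4*(k:ℝ)*((k:ℝ)+1)*((k:ℝ)+2))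
        = ∑ k ∈ T, |c k| * Real.sqrt (Nv k) := by
      refine Finset.sum_congr rfl fun k _ => ?_
      rw [mul_assoc, ← Real.sqrt_mul (Hv_pos k).le]
      congr 2
      rw [hNv]
      dsimp only
      rw [NH]
      ring
    have e2 : ∑ k ∈ T, (|c k| * Real.sqrt (Hv k))^2 = ∑ k ∈ T, (c k)^2 * Hv k := by
      refine Finset.sum_congr rfl fun k _ => ?_
      rw [mul_pow, sq_abs, Real.sq_sqrt (Hv_pos k).le]
    have e3 : ∑ k ∈ T, (Real.sqrt (3/4*(k:ℝ)*((k:ℝ)+1)*((k:ℝ)+2)))^2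
        = ∑ k ∈ T, 3/4*(k:ℝ)*((k:ℝ)+1)*((k:ℝ)+2) := by
      refine Finset.sum_congr rfl fun k _ => ?_
      rw [Real.sq_sqrt (by positivity)]
    rw [e1, e2, e3] at key
    exact key
  -- Step 3 : the eigenvalue sum bound
  have hSum : (∑ k ∈ T, 3/4*(k:ℝ)*((k:ℝ)+1)*((k:ℝ)+2))
      ≤ (p:ℝ)*((p:ℝ)+1)^2*((p:ℝ)+2) := by
    rw [hT, sum3]
    have hp0 : (0:ℝ) ≤ (p:ℝ) := Nat.cast_nonneg p
    nlinarith [hp0, sq_nonneg ((p:ℝ))]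
  -- put the pieces together
  have hRnn : 0 ≤ Bf ξ ξ := Bf_self_nonneg ξ
  have hSnn : 0 ≤ ∑ k ∈ T, 3/4*(k:ℝ)*((k:ℝ)+1)*((k:ℝ)+2) := by
    apply Finset.sum_nonneg
    intro k _
    positivity
  calc Bf (derivative ξ) (derivative ξ)
      ≤ (∑ k ∈ T, |c k| * Real.sqrt (Nv k))^2 := hLb
    _ ≤ (∑ k ∈ T, (c k)^2 * Hv k) * (∑ k ∈ T, 3/4*(k:ℝ)*((k:ℝ)+1)*((k:ℝ)+2)) := hStep2
    _ = Bf ξ ξ * (∑ k ∈ T, 3/4*(k:ℝ)*((k:ℝ)+1)*((k:ℝ)+2)) := by rw [hPar]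
    _ ≤ Bf ξ ξ * ((p:ℝ)*((p:ℝ)+1)^2*((p:ℝ)+2)) := mul_le_mul_of_nonneg_left hSum hRnn
    _ = (p:ℝ)*((p:ℝ)+1)^2*((p:ℝ)+2) * Bf ξ ξ := by ring
end
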